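/- arXiv:2401.14483 — 10 statements merged into one kernel-verified Lean document; each statement's English description precedes it below -/
import Mathlib

section
/- Call a set 𝒢 ⊆ C(𝒴) an offer if: (O1) f, g ∈ 𝒢 implies f + g ∈ 𝒢; (O2) g ∈ 𝒢 and α ≥ 0 implies αg ∈ 𝒢; (O3) every g ∈ 𝒢 satisfies inf_{y∈𝒴} g(y) ≤ 0; (O4) every g ∈ C(𝒴) with g ≤ 0 pointwise belongs to 𝒢; (O5) 𝒢 is closed in the supremum norm. Then for every offer 𝒢, the set 𝒫_𝒢 := {φ ∈ Δ(𝒴) : ∫ g dφ ≤ 0 for all g ∈ 𝒢} is a credal set (nonempty, convex, and closed in the topology of weak convergence), and 𝒢 = {g ∈ C(𝒴) : ∫ g dφ ≤ 0 for all φ ∈ 𝒫_𝒢}. -/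
open MeasureTheory
open scoped NNReal

/-- Convexity for a set of probability measures: closedness under convex combinations,
expressed at the level of the underlying measures. -/
def ConvexPM {Y : Type*} [MeasurableSpace Y] (S : Set (ProbabilityMeasure Y)) : Prop :=
  ∀ φ₁ ∈ S, ∀ φ₂ ∈ S, ∀ a : ℝ≥0, a ≤ 1 →
    ∀ ψ : ProbabilityMeasure Y,
      (ψ : Measure Y) = a • (φ₁ : Measure Y) + (1 - a) • (φ₂ : Measure Y) → ψ ∈ S

/-- An offer: additive, positively homogeneous, prohibiting sure gains, containing all
pointwise nonpositive gambles, and closed in the supremum norm. -/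
def IsOffer {Y : Type*} [TopologicalSpace Y] (G : Set (ContinuousMap Y ℝ)) : Prop :=
  (∀ f ∈ G, ∀ g ∈ G, f + g ∈ G) ∧
  (∀ g ∈ G, ∀ α : ℝ, 0 ≤ α → α • g ∈ G) ∧
  (∀ g ∈ G, ⨅ x, g x ≤ 0) ∧
  (∀ g : ContinuousMap Y ℝ, (∀ x, g x ≤ 0) → g ∈ G) ∧
  IsClosed G


set_option linter.unusedSectionVars false
set_option linter.unusedVariables false
set_option maxHeartbeats 1000000

set_option linter.unusedSectionVars false
set_option linter.unusedVariables false

open MeasureTheory Set TopologicalSpace BoundedContinuousFunction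
open scoped NNReal ENNReal

noncomputable section

namespace RMKaux

variable {Y : Type*} [TopologicalSpace Y] [CompactSpace Y]
    [TopologicalSpace.MetrizableSpace Y] [Nonempty Y]

variable (L : C(Y, ℝ) →ₗ[ℝ] ℝ)

/-- test functions for a set `K` -/
def tset (K : Set Y) : Set C(Y, ℝ) := {f | (∀ x, 0 ≤ f x) ∧ ∀ x ∈ K, 1 ≤ f x}

lemma one_mem_tset (K : Set Y) : (1 : C(Y, ℝ)) ∈ tset K :=
  ⟨fun _ => zero_le_one, fun _ _ => le_refl 1⟩

lemma tset_mono {K₁ K₂ : Set Y} (h : K₁ ⊆ K₂) : tset K₂ ⊆ tset K₁ :=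
  fun f hf => ⟨hf.1, fun x hx => hf.2 x (h hx)⟩

/-- the content value -/
def rval (K : Set Y) : ℝ := sInf (L '' tset K)

variable (hpos : ∀ f : C(Y, ℝ), (∀ x, 0 ≤ f x) → 0 ≤ L f)

lemma img_nonempty (K : Set Y) : (L '' tset K).Nonempty := ⟨L 1, 1, one_mem_tset K, rfl⟩

include hpos in
lemma img_bddBelow (K : Set Y) : BddBelow (L '' tset K) := by
  refine ⟨0, ?_⟩
  rintro _ ⟨f, hf, rfl⟩
  exact hpos f hf.1

include hpos in
lemma rval_nonneg (K : Set Y) : 0 ≤ rval L K :=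
  le_csInf (img_nonempty L K) (by rintro _ ⟨f, hf, rfl⟩; exact hpos f hf.1)

include hpos in
lemma rval_le {K : Set Y} {f : C(Y, ℝ)} (hf : f ∈ tset K) : rval L K ≤ L f :=
  csInf_le (img_bddBelow L hpos K) ⟨f, hf, rfl⟩

lemma le_rval {K : Set Y} {c : ℝ} (h : ∀ f ∈ tset K, c ≤ L f) : c ≤ rval L K :=
  le_csInf (img_nonempty L K) (by rintro _ ⟨f, hf, rfl⟩; exact h f hf)

include hpos in
lemma rval_mono {K₁ K₂ : Set Y} (h : K₁ ⊆ K₂) : rval L K₁ ≤ rval L K₂ :=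
  csInf_le_csInf (img_bddBelow L hpos K₁) (img_nonempty L K₂) (image_mono (tset_mono h))

include hpos in
lemma exists_tset_lt (K : Set Y) {ε : ℝ} (hε : 0 < ε) :
    ∃ f ∈ tset K, L f < rval L K + ε := by
  obtain ⟨a, ⟨f, hf, rfl⟩, ha⟩ := exists_lt_of_csInf_lt (img_nonempty L K)
    (lt_add_of_pos_right (rval L K) hε)
  exact ⟨f, hf, ha⟩

include hpos in
lemma rval_union_le (K₁ K₂ : Set Y) :
    rval L (K₁ ∪ K₂) ≤ rval L K₁ + rval L K₂ := by
  refine le_of_forall_pos_le_add fun ε hε => ?_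
  obtain ⟨f₁, hf₁, hl₁⟩ := exists_tset_lt L hpos K₁ (half_pos hε)
  obtain ⟨f₂, hf₂, hl₂⟩ := exists_tset_lt L hpos K₂ (half_pos hε)
  have hmem : f₁ + f₂ ∈ tset (K₁ ∪ K₂) := by
    constructor
    · intro x; exact add_nonneg (hf₁.1 x) (hf₂.1 x)
    · rintro x (hx | hx)
      · calc (1:ℝ) ≤ f₁ x := hf₁.2 x hx
          _ ≤ f₁ x + f₂ x := le_add_of_nonneg_right (hf₂.1 x)
          _ = (f₁ + f₂) x := rfl
      · calc (1:ℝ) ≤ f₂ x := hf₂.2 x hx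
          _ ≤ f₁ x + f₂ x := le_add_of_nonneg_left (hf₁.1 x)
          _ = (f₁ + f₂) x := rfl
  calc rval L (K₁ ∪ K₂) ≤ L (f₁ + f₂) := rval_le L hpos hmem
    _ = L f₁ + L f₂ := map_add L f₁ f₂
    _ ≤ (rval L K₁ + ε / 2) + (rval L K₂ + ε / 2) := add_le_add hl₁.le hl₂.le
    _ = rval L K₁ + rval L K₂ + ε := by ring

include hpos in
lemma rval_union_disjoint (K₁ K₂ : Set Y) (hd : Disjoint K₁ K₂)
    (h₁ : IsClosed K₁) (h₂ : IsClosed K₂) :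
    rval L (K₁ ∪ K₂) = rval L K₁ + rval L K₂ := by
  refine le_antisymm (rval_union_le L hpos K₁ K₂) ?_
  refine le_rval L fun f hf => ?_
  obtain ⟨g, hg0, hg1, hg01⟩ := exists_continuous_zero_one_of_isClosed h₁ h₂ hd
  have hmem₁ : f * (1 - g) ∈ tset K₁ := by
    constructor
    · intro x
      exact mul_nonneg (hf.1 x) (by simpa using (hg01 x).2)
    · intro x hx
      have : g x = 0 := hg0 hx
      have h1 : (f * (1 - g)) x = f x := by
        simp [this]
      rw [h1]; exact hf.2 x (Or.inl hx)
  have hmem₂ : f * g ∈ tset K₂ := by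
    constructor
    · intro x; exact mul_nonneg (hf.1 x) (hg01 x).1
    · intro x hx
      have : g x = 1 := hg1 hx
      have h1 : (f * g) x = f x := by simp [this]
      rw [h1]; exact hf.2 x (Or.inr hx)
  have key : L (f * (1 - g)) + L (f * g) = L f := by
    rw [← map_add]
    congr 1
    ext x
    simp
    ring
  calc rval L K₁ + rval L K₂ ≤ L (f * (1 - g)) + L (f * g) :=
        add_le_add (rval_le L hpos hmem₁) (rval_le L hpos hmem₂)
    _ = L f := key

/-- The Riesz content associated to a positive functional. -/
def rcontent : Content Y where
  toFun K := (rval L K).toNNReal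
  mono' K₁ K₂ h := Real.toNNReal_mono (rval_mono L hpos h)
  sup_disjoint' K₁ K₂ hd h₁ h₂ := by
    simp only [Compacts.coe_sup]
    rw [rval_union_disjoint L hpos K₁ K₂ hd h₁ h₂,
      Real.toNNReal_add (rval_nonneg L hpos _) (rval_nonneg L hpos _)]
  sup_le' K₁ K₂ := by
    simp only [Compacts.coe_sup]
    rw [← Real.toNNReal_add (rval_nonneg L hpos _) (rval_nonneg L hpos _)]
    exact Real.toNNReal_mono (rval_union_le L hpos K₁ K₂)

variable [MeasurableSpace Y] [BorelSpace Y]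

/-- The Riesz measure. -/
def rmeasure : Measure Y := (rcontent L hpos).measure

lemma rmeasure_univ (hone : L 1 = 1) : rmeasure L hpos univ = 1 := by
  have hK : IsCompact (univ : Set Y) := isCompact_univ
  have h1 : (rcontent L hpos).measure univ = (rcontent L hpos).outerMeasure univ :=
    Content.measure_apply _ MeasurableSet.univ
  have h2 : (rcontent L hpos).outerMeasure univ
      = (rcontent L hpos).innerContent ⟨univ, isOpen_univ⟩ :=
    Content.outerMeasure_opens _ ⟨univ, isOpen_univ⟩
  have h3 : (rcontent L hpos).innerContent ⟨univ, isOpen_univ⟩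
      = (rcontent L hpos) ⟨univ, hK⟩ :=
    Content.innerContent_of_isCompact _ hK isOpen_univ
  have h4 : rval L univ = 1 := by
    refine le_antisymm ?_ ?_
    · have := rval_le L hpos (one_mem_tset (univ : Set Y))
      rwa [hone] at this
    · refine le_rval L fun f hf => ?_
      have : ∀ x, 0 ≤ (f - 1) x := by
        intro x
        simp only [ContinuousMap.sub_apply, ContinuousMap.one_apply, sub_nonneg]
        exact hf.2 x (mem_univ x)
      have := hpos _ this
      rw [map_sub, hone, sub_nonneg] at this
      exact this
  rw [rmeasure, h1, h2, h3]
  show (((rval L univ).toNNReal : ℝ≥0) : ℝ≥0∞) = 1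
  rw [h4]
  simp

lemma isProb (hone : L 1 = 1) : IsProbabilityMeasure (rmeasure L hpos) :=
  ⟨rmeasure_univ L hpos hone⟩

omit [Nonempty Y] in
lemma cm_integrable (μ : Measure Y) [IsFiniteMeasure μ] (f : C(Y, ℝ)) :
    Integrable (⇑f) μ := by
  exact (mkOfCompact f).integrable μ

/-- key upper bound: if `0 ≤ h ≤ 1` and the closure of the support of `h` lies in an open
set `V`, then `L h ≤ μ V`. -/
lemma lfun_le_measure_open (hone : L 1 = 1) (h : C(Y, ℝ))
    (h0 : ∀ x, 0 ≤ h x) (h1 : ∀ x, h x ≤ 1) {V : Set Y} (hV : IsOpen V)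
    (hsupp : closure {x | h x ≠ 0} ⊆ V) :
    L h ≤ (rmeasure L hpos V).toReal := by
  have : IsProbabilityMeasure (rmeasure L hpos) := isProb L hpos hone
  set K : Compacts Y := ⟨closure {x | h x ≠ 0}, isClosed_closure.isCompact⟩ with hK
  have hLh : L h ≤ rval L K := by
    refine le_rval L fun f hf => ?_
    have hle : ∀ x, 0 ≤ (f - h) x := by
      intro x
      simp only [ContinuousMap.sub_apply, sub_nonneg]
      by_cases hx : h x = 0
      · rw [hx]; exact hf.1 x
      · exact le_trans (h1 x) (hf.2 x (subset_closure hx))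
    have := hpos _ hle
    rw [map_sub, sub_nonneg] at this
    exact this
  have hcoe : ((rcontent L hpos) K : ℝ≥0∞) ≤ rmeasure L hpos V := by
    calc ((rcontent L hpos) K : ℝ≥0∞)
        ≤ (rcontent L hpos).innerContent ⟨V, hV⟩ :=
          Content.le_innerContent _ _ _ hsupp
      _ = (rcontent L hpos).outerMeasure V := (Content.outerMeasure_opens _ ⟨V, hV⟩).symm
      _ = rmeasure L hpos V := (Content.measure_apply _ hV.measurableSet).symm
  have hne : rmeasure L hpos V ≠ ⊤ := measure_ne_top _ _
  have h2 : (((rval L K).toNNReal : ℝ≥0∞)).toReal ≤ (rmeasure L hpos V).toReal :=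
    ENNReal.toReal_mono hne hcoe
  have h3 : (((rval L K).toNNReal : ℝ≥0∞)).toReal = rval L K := by
    simp [Real.toNNReal_of_nonneg (rval_nonneg L hpos K)]
  linarith [h2, h3.ge, hLh]

lemma clampsum (n : ℕ) (t : ℝ) (h0 : 0 ≤ t) (h1 : t ≤ n) :
    ∑ k ∈ Finset.range n, min 1 (max 0 (t - k)) = t := by
  induction n with
  | zero =>
    have ht : t = 0 := le_antisymm (by exact_mod_cast h1) h0
    simp [ht]
  | succ n ih =>
    rw [Finset.sum_range_succ]
    by_cases hc : t ≤ n
    · rw [ih hc]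
      have : t - n ≤ 0 := by linarith
      rw [max_eq_left this, min_eq_right zero_le_one, add_zero]
    · push_neg at hc
      have hall : ∀ k ∈ Finset.range n, min 1 (max 0 (t - k)) = 1 := by
        intro k hk
        rw [Finset.mem_range] at hk
        have : (k : ℝ) + 1 ≤ n := by exact_mod_cast hk
        have h2 : (1:ℝ) ≤ t - k := by linarith
        rw [max_eq_right (by linarith), min_eq_left h2]
      rw [Finset.sum_congr rfl hall, Finset.sum_const, Finset.card_range, nsmul_eq_mul,
        mul_one]
      have htn : (0:ℝ) ≤ t - n := by linarith
      have htn1 : t - n ≤ 1 := by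
        push_cast at h1 ⊢
        linarith
      rw [max_eq_right htn, min_eq_right htn1]
      ring

section Main

variable (hone : L 1 = 1)

/-- the plateau function `min 1 (max 0 (n f - k))`. -/
def plat (f : C(Y, ℝ)) (n k : ℕ) : C(Y, ℝ) :=
  ⟨fun x => min 1 (max 0 ((n : ℝ) * f x - k)), by
    apply Continuous.min continuous_const
    exact Continuous.max continuous_const ((continuous_const.mul f.continuous).sub
      continuous_const)⟩

omit [CompactSpace Y] [MetrizableSpace Y] [Nonempty Y] in
lemma plat_nonneg (f : C(Y, ℝ)) (n k : ℕ) (x : Y) : 0 ≤ plat f n k x :=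
  le_min zero_le_one (le_max_left 0 _)

omit [CompactSpace Y] [MetrizableSpace Y] [Nonempty Y] in
lemma plat_le_one (f : C(Y, ℝ)) (n k : ℕ) (x : Y) : plat f n k x ≤ 1 :=
  min_le_left _ _

omit [CompactSpace Y] [MetrizableSpace Y] [Nonempty Y] in
lemma plat_sum (f : C(Y, ℝ)) (hf0 : ∀ x, 0 ≤ f x) (hf1 : ∀ x, f x ≤ 1) (n : ℕ) :
    ∑ k ∈ Finset.range n, plat f n k = (n : ℝ) • f := by
  ext x
  rw [ContinuousMap.sum_apply]
  have h0 : 0 ≤ (n : ℝ) * f x := mul_nonneg (Nat.cast_nonneg n) (hf0 x)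
  have h1 : (n : ℝ) * f x ≤ n := by
    calc (n:ℝ) * f x ≤ n * 1 := by
          apply mul_le_mul_of_nonneg_left (hf1 x) (Nat.cast_nonneg n)
      _ = n := mul_one _
  simpa [plat] using clampsum n ((n:ℝ) * f x) h0 h1

end Main

end RMKaux



open MeasureTheory Set TopologicalSpace BoundedContinuousFunction
open scoped NNReal ENNReal

noncomputable section

namespace RMKaux

variable {Y : Type*} [TopologicalSpace Y] [CompactSpace Y]
    [TopologicalSpace.MetrizableSpace Y] [Nonempty Y]
    [MeasurableSpace Y] [BorelSpace Y]

variable (L : C(Y, ℝ) →ₗ[ℝ] ℝ)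
variable (hpos : ∀ f : C(Y, ℝ), (∀ x, 0 ≤ f x) → 0 ≤ L f)

include hpos in
lemma lfun_le_integral (hone : L 1 = 1) (f : C(Y, ℝ))
    (hf0 : ∀ x, 0 ≤ f x) (hf1 : ∀ x, f x ≤ 1) :
    L f ≤ ∫ x, f x ∂(rmeasure L hpos) := by
  have hP : IsProbabilityMeasure (rmeasure L hpos) := isProb L hpos hone
  set μ := rmeasure L hpos with hμ
  set I := ∫ x, f x ∂μ with hI
  set m : ℝ → ℝ := fun s => (μ {x | s < f x}).toReal with hm
  have hWopen : ∀ s : ℝ, IsOpen {x | s < f x} :=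
    fun s => isOpen_lt continuous_const f.continuous
  have hm0 : ∀ s, 0 ≤ m s := fun s => ENNReal.toReal_nonneg
  have hm1 : ∀ s, m s ≤ 1 := by
    intro s
    have h1 : μ {x | s < f x} ≤ μ univ := measure_mono (subset_univ _)
    have := ENNReal.toReal_mono (measure_ne_top _ _) h1
    rwa [measure_univ, ENNReal.toReal_one] at this
  -- main estimate for a fixed n = p + 2
  have key : ∀ p : ℕ, ((p:ℝ) + 2) * L f ≤ 2 + ((p:ℝ) + 2) * I := by
    intro p
    set n : ℕ := p + 2 with hn
    have hnR : (0:ℝ) < n := by positivity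
    have hncast : ((n:ℕ):ℝ) = (p:ℝ) + 2 := by push_cast [hn]; ring
    -- upper bound for L of plateau functions
    have key1 : ∀ k : ℕ, L (plat f n k) ≤ m (((k:ℝ) - 1) / n) := by
      intro k
      have hsub : {x | plat f n k x ≠ 0} ⊆ {x | (k:ℝ) / n ≤ f x} := by
        intro x hx
        simp only [mem_setOf_eq] at hx ⊢
        have hmax : 0 < max 0 ((n:ℝ) * f x - k) := by
          rcases lt_or_eq_of_le (le_max_left 0 ((n:ℝ) * f x - k)) with h | h
          · exact h
          · exfalso; apply hx
            show min 1 (max 0 ((n:ℝ) * f x - k)) = 0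
            rw [← h, min_eq_right zero_le_one]
        have hgt : 0 < (n:ℝ) * f x - k := by
          by_contra hcon
          push_neg at hcon
          rw [max_eq_left hcon] at hmax
          exact lt_irrefl 0 hmax
        rw [div_le_iff₀ hnR]
        linarith [hgt]
      have hclosed : IsClosed {x | (k:ℝ) / n ≤ f x} :=
        isClosed_le continuous_const f.continuous
      have hsubV : {x | (k:ℝ) / n ≤ f x} ⊆ {x | ((k:ℝ) - 1) / n < f x} := by
        intro x hx
        simp only [mem_setOf_eq] at hx ⊢
        have hlt : ((k:ℝ) - 1) / n < (k:ℝ) / n := by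
          gcongr
          linarith
        exact lt_of_lt_of_le hlt hx
      exact lfun_le_measure_open L hpos hone (plat f n k) (plat_nonneg f n k)
        (plat_le_one f n k) (hWopen _)
        ((closure_minimal hsub hclosed).trans hsubV)
    -- lower bound for integrals of plateau functions
    have key2 : ∀ k : ℕ, m (((k:ℝ) + 1) / n) ≤ ∫ x, plat f n k x ∂μ := by
      intro k
      have hms : MeasurableSet {x | ((k:ℝ) + 1) / n < f x} := (hWopen _).measurableSet
      rw [hm]
      calc (μ {x | ((k:ℝ) + 1) / n < f x}).toReal
          = ∫ x, ({x | ((k:ℝ) + 1) / n < f x}).indicator 1 x ∂μ :=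
            (integral_indicator_one hms).symm
        _ ≤ ∫ x, plat f n k x ∂μ := by
            apply integral_mono ((integrable_const (1:ℝ)).indicator hms)
              (cm_integrable μ (plat f n k))
            intro x
            by_cases hx : x ∈ {x | ((k:ℝ) + 1) / n < f x}
            · rw [indicator_of_mem hx]
              simp only [Pi.one_apply]
              have hgt : (k:ℝ) + 1 < (n:ℝ) * f x := by
                rw [mem_setOf_eq, div_lt_iff₀ hnR] at hx
                linarith [hx]
              show (1:ℝ) ≤ min 1 (max 0 ((n:ℝ) * f x - k))
              exact le_min le_rfl (le_max_of_le_right (by linarith))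
            · rw [indicator_of_notMem hx]
              exact plat_nonneg f n k x
    -- sums
    have hsumL : ∑ k ∈ Finset.range n, L (plat f n k) = (n:ℝ) * L f := by
      rw [← map_sum L (fun k => plat f n k) (Finset.range n), plat_sum f hf0 hf1 n,
        _root_.map_smul, smul_eq_mul]
    have hsumI : ∑ k ∈ Finset.range n, ∫ x, plat f n k x ∂μ = (n:ℝ) * I := by
      rw [← integral_finset_sum _ (fun i _ => cm_integrable μ (plat f n i))]
      have : (fun a => ∑ k ∈ Finset.range n, plat f n k a) = fun a => (n:ℝ) * f a := by
        funext a
        have := congrArg (fun g : C(Y,ℝ) => g a) (plat_sum f hf0 hf1 n)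
        simpa [ContinuousMap.sum_apply] using this
      rw [this, integral_const_mul]
    -- shift comparison
    set F : ℕ → ℝ := fun k => m (((k:ℝ) - 1) / n) with hF
    set H : ℕ → ℝ := fun k => m (((k:ℝ) + 1) / n) with hH
    have hshift : ∑ k ∈ Finset.range n, F k ≤ 2 + ∑ k ∈ Finset.range n, H k := by
      have e1 : ∑ k ∈ Finset.range (p + 2), F k
          = (∑ k ∈ Finset.range (p + 1), F (k + 1)) + F 0 := Finset.sum_range_succ' F (p + 1)
      have e2 : ∑ k ∈ Finset.range (p + 1), F (k + 1)
          = (∑ k ∈ Finset.range p, F (k + 2)) + F 1 :=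
        Finset.sum_range_succ' (fun k => F (k + 1)) p
      have e3 : ∀ k : ℕ, F (k + 2) = H k := by
        intro k
        simp only [hF, hH]
        congr 1
        push_cast
        ring
      have e4 : ∑ k ∈ Finset.range p, F (k + 2) = ∑ k ∈ Finset.range p, H k :=
        Finset.sum_congr rfl fun k _ => e3 k
      have e5 : ∑ k ∈ Finset.range p, H k ≤ ∑ k ∈ Finset.range n, H k :=
        Finset.sum_le_sum_of_subset_of_nonneg
          (Finset.range_subset_range.2 (by omega)) (fun i _ _ => hm0 _)
      have hF0 : F 0 ≤ 1 := hm1 _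
      have hF1 : F 1 ≤ 1 := hm1 _
      rw [hn] at *
      calc ∑ k ∈ Finset.range (p + 2), F k
          = (∑ k ∈ Finset.range p, F (k + 2)) + F 1 + F 0 := by rw [e1, e2]
        _ = (∑ k ∈ Finset.range p, H k) + F 1 + F 0 := by rw [e4]
        _ ≤ (∑ k ∈ Finset.range (p + 2), H k) + 1 + 1 := by
            apply add_le_add (add_le_add e5 hF1) hF0
        _ = 2 + ∑ k ∈ Finset.range (p + 2), H k := by ring
    have c1 : (n:ℝ) * L f ≤ ∑ k ∈ Finset.range n, F k := by
      rw [← hsumL]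
      exact Finset.sum_le_sum fun k _ => key1 k
    have c2 : ∑ k ∈ Finset.range n, H k ≤ (n:ℝ) * I := by
      rw [← hsumI]
      exact Finset.sum_le_sum fun k _ => key2 k
    have := (c1.trans hshift).trans (by linarith [c2] : 2 + ∑ k ∈ Finset.range n, H k ≤ 2 + (n:ℝ) * I)
    rw [hncast] at this
    exact this
  -- conclude by letting n → ∞
  refine le_of_forall_pos_le_add fun ε hε => ?_
  obtain ⟨p, hp⟩ := exists_nat_gt (2 / ε)
  have hnR : (0:ℝ) < (p:ℝ) + 2 := by positivity
  have h2n : 2 / ((p:ℝ) + 2) < ε := by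
    rw [div_lt_iff₀ hnR]
    have : 2 / ε < (p:ℝ) + 2 := lt_trans hp (by linarith)
    rw [div_lt_iff₀ hε] at this
    linarith [this]
  have hkey := key p
  have : L f ≤ 2 / ((p:ℝ) + 2) + I := by
    rw [div_add' _ _ _ (ne_of_gt hnR), le_div_iff₀ hnR]
    linarith [hkey]
  linarith [this, h2n]

include hpos in
lemma lfun_le_integral' (hone : L 1 = 1) (f : C(Y, ℝ)) :
    L f ≤ ∫ x, f x ∂(rmeasure L hpos) := by
  have hP : IsProbabilityMeasure (rmeasure L hpos) := isProb L hpos hone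
  set μ := rmeasure L hpos with hμ
  set c : ℝ := ‖f‖ + 1 with hc
  have hc0 : 0 < c := by positivity
  have hfb : ∀ x, |f x| ≤ ‖f‖ := by
    intro x
    simpa [Real.norm_eq_abs] using ContinuousMap.norm_coe_le_norm f x
  set h : C(Y, ℝ) := (2 * c)⁻¹ • (f + ContinuousMap.const Y c) with hh
  have hcoe : ∀ x, h x = (2 * c)⁻¹ * (f x + c) := fun x => rfl
  have h0 : ∀ x, 0 ≤ h x := by
    intro x
    rw [hcoe]
    have := abs_le.1 (hfb x)
    have hge : -c ≤ f x := by linarith [this.1]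
    have : 0 ≤ f x + c := by linarith [hge]
    positivity
  have h1 : ∀ x, h x ≤ 1 := by
    intro x
    rw [hcoe]
    have := abs_le.1 (hfb x)
    rw [inv_mul_le_iff₀ (by positivity), mul_one]
    linarith [this.2]
  have hconst : ContinuousMap.const Y c = c • (1 : C(Y, ℝ)) := by
    ext x; simp
  have hLh : L h = (2 * c)⁻¹ * (L f + c) := by
    rw [hh, _root_.map_smul, map_add, hconst, _root_.map_smul, hone]
    simp [smul_eq_mul]
  have hInth : ∫ x, h x ∂μ = (2 * c)⁻¹ * ((∫ x, f x ∂μ) + c) := by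
    have e1 : (fun x => h x) = fun x => (2 * c)⁻¹ * (f x + c) := funext hcoe
    rw [e1, integral_const_mul]
    congr 1
    rw [integral_add (cm_integrable μ f) (integrable_const c), integral_const, probReal_univ,
      one_smul]
  have := lfun_le_integral L hpos hone h h0 h1
  rw [hLh, hInth] at this
  have h2c : (0:ℝ) < (2 * c)⁻¹ := by positivity
  have := (mul_le_mul_iff_right₀ h2c).1 this
  linarith [this]

include hpos in
lemma integral_eq (hone : L 1 = 1) (f : C(Y, ℝ)) :
    ∫ x, f x ∂(rmeasure L hpos) = L f := by
  refine le_antisymm ?_ (lfun_le_integral' L hpos hone f)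
  have hneg := lfun_le_integral' L hpos hone (-f)
  rw [map_neg] at hneg
  have e : ∫ x, (-f) x ∂(rmeasure L hpos) = -∫ x, f x ∂(rmeasure L hpos) := by
    simp only [ContinuousMap.neg_apply]
    exact integral_neg _
  rw [e] at hneg
  linarith [hneg]

include hpos in
theorem exists_prob_rep (hone : L 1 = 1) :
    ∃ μ : ProbabilityMeasure Y, ∀ f : C(Y, ℝ), ∫ x, f x ∂(μ : Measure Y) = L f :=
  ⟨⟨rmeasure L hpos, isProb L hpos hone⟩, integral_eq L hpos hone⟩

end RMKaux


section FinalAux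

open MeasureTheory Set TopologicalSpace BoundedContinuousFunction
open scoped NNReal ENNReal

noncomputable section

namespace RMKaux

variable {Y : Type*} [TopologicalSpace Y] [CompactSpace Y]
    [TopologicalSpace.MetrizableSpace Y] [Nonempty Y]
    [MeasurableSpace Y] [BorelSpace Y]

lemma norm_bound (h : C(Y, ℝ)) (x : Y) : |h x| ≤ ‖h‖ := by
  simpa [Real.norm_eq_abs] using ContinuousMap.norm_coe_le_norm h x

/-- Separation: for `g ∉ G` there is a probability measure in the credal set giving `g`
positive expectation. -/
lemma separation {G : Set (ContinuousMap Y ℝ)} (hG : IsOffer G) (g : C(Y, ℝ)) (hg : g ∉ G) :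
    ∃ φ : ProbabilityMeasure Y,
      (∀ a ∈ G, ∫ x, a x ∂(φ : Measure Y) ≤ 0) ∧ 0 < ∫ x, g x ∂(φ : Measure Y) := by
  obtain ⟨hadd, hsmul, hinf, hneg, hclosed⟩ := hG
  have h0G : (0 : C(Y, ℝ)) ∈ G := hneg 0 fun x => le_rfl
  have hconv : Convex ℝ G := by
    intro a ha b hb s t hs ht hst
    exact hadd _ (hsmul a ha s hs) _ (hsmul b hb t ht)
  obtain ⟨f, u, hfu, hfg⟩ := geometric_hahn_banach_closed_point hconv hclosed hg
  have hu0 : 0 < u := by simpa using hfu 0 h0G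
  have hle : ∀ a ∈ G, f a ≤ 0 := by
    intro a ha
    by_contra hpos'
    push_neg at hpos'
    obtain ⟨α, hα⟩ := exists_nat_gt (u / f a)
    have h1 := hfu _ (hsmul a ha α (Nat.cast_nonneg α))
    rw [_root_.map_smul, smul_eq_mul] at h1
    rw [div_lt_iff₀ hpos'] at hα
    linarith
  have hposf : ∀ h : C(Y, ℝ), (∀ x, 0 ≤ h x) → 0 ≤ f h := by
    intro h hh
    have hmem : -h ∈ G := hneg (-h) fun x => by simpa using hh x
    have := hle _ hmem
    rw [map_neg] at this
    linarith
  have hf1 : 0 < f 1 := by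
    rcases lt_or_eq_of_le (hposf 1 fun x => zero_le_one) with h | h
    · exact h
    · exfalso
      have hzero : ∀ h : C(Y, ℝ), f h ≤ 0 := by
        intro h'
        have k1 : 0 ≤ f (‖h'‖ • (1 : C(Y, ℝ)) - h') := by
          apply hposf
          intro x
          have := (abs_le.1 (norm_bound h' x)).2
          simp only [ContinuousMap.sub_apply, ContinuousMap.smul_apply,
            ContinuousMap.one_apply, smul_eq_mul, mul_one, sub_nonneg]
          exact this
        rw [map_sub, _root_.map_smul, smul_eq_mul, ← h, mul_zero, zero_sub] at k1
        linarith
      have := hzero g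
      linarith
  set L : C(Y, ℝ) →ₗ[ℝ] ℝ := (f 1)⁻¹ • (f : C(Y, ℝ) →ₗ[ℝ] ℝ) with hL
  have hLcoe : ∀ h : C(Y, ℝ), L h = (f 1)⁻¹ * f h := fun h => rfl
  have hpos : ∀ h : C(Y, ℝ), (∀ x, 0 ≤ h x) → 0 ≤ L h := by
    intro h hh
    rw [hLcoe]
    exact mul_nonneg (inv_nonneg.2 hf1.le) (hposf h hh)
  have hone : L 1 = 1 := by
    rw [hLcoe]
    exact inv_mul_cancel₀ (ne_of_gt hf1)
  obtain ⟨φ, hφ⟩ := exists_prob_rep L hpos hone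
  refine ⟨φ, ?_, ?_⟩
  · intro a ha
    rw [hφ a, hLcoe]
    exact mul_nonpos_of_nonneg_of_nonpos (inv_nonneg.2 hf1.le) (hle a ha)
  · rw [hφ g, hLcoe]
    exact mul_pos (inv_pos.2 hf1) (lt_trans hu0 hfg)

/-- continuity of integration against a fixed continuous function -/
lemma continuous_integral_cm (g : C(Y, ℝ)) :
    Continuous fun φ : ProbabilityMeasure Y => ∫ x, g x ∂(φ : Measure Y) := by
  rw [continuous_iff_continuousAt]
  intro φ
  have h := (ProbabilityMeasure.tendsto_iff_forall_integral_tendsto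
    (F := nhds φ) (μs := id) (μ := φ)).1 Filter.tendsto_id (mkOfCompact g)
  simpa [ContinuousAt, mkOfCompact_apply] using h

end RMKaux


open RMKaux

/-- Every offer determines a credal set (nonempty, convex and closed in the topology of
weak convergence) of probability measures, from which the offer is recovered as the set of
gambles with nonpositive expectation. -/
theorem stmt4 {Y : Type*} [TopologicalSpace Y] [CompactSpace Y]
    [TopologicalSpace.MetrizableSpace Y] [MeasurableSpace Y] [BorelSpace Y] [Nonempty Y]
    (G : Set (ContinuousMap Y ℝ)) (hG : IsOffer G) :
    {φ : ProbabilityMeasure Y | ∀ g ∈ G, ∫ x, g x ∂(φ : Measure Y) ≤ 0}.Nonempty ∧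
    ConvexPM {φ : ProbabilityMeasure Y | ∀ g ∈ G, ∫ x, g x ∂(φ : Measure Y) ≤ 0} ∧
    IsClosed {φ : ProbabilityMeasure Y | ∀ g ∈ G, ∫ x, g x ∂(φ : Measure Y) ≤ 0} ∧
    G = {g : ContinuousMap Y ℝ |
      ∀ φ ∈ {φ : ProbabilityMeasure Y | ∀ g' ∈ G, ∫ x, g' x ∂(φ : Measure Y) ≤ 0},
        ∫ x, g x ∂(φ : Measure Y) ≤ 0} := by
  have hone_notin : (1 : C(Y, ℝ)) ∉ G := by
    intro hmem
    have := hG.2.2.1 1 hmem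
    simp only [ContinuousMap.one_apply, ciInf_const] at this
    linarith
  refine ⟨?_, ?_, ?_, ?_⟩
  · -- nonempty
    obtain ⟨φ, hφ1, _⟩ := separation hG 1 hone_notin
    exact ⟨φ, hφ1⟩
  · -- convex
    intro φ₁ h₁ φ₂ h₂ a ha ψ hψ
    intro g hg
    have hint1 : Integrable (⇑g) (φ₁ : Measure Y) := cm_integrable _ g
    have hint2 : Integrable (⇑g) (φ₂ : Measure Y) := cm_integrable _ g
    have hψ' : (ψ : Measure Y)
        = ((a : ℝ≥0∞)) • (φ₁ : Measure Y) + (((1 - a : ℝ≥0) : ℝ≥0∞)) • (φ₂ : Measure Y) := by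
      rw [hψ]; rfl
    have key : ∫ x, g x ∂(ψ : Measure Y)
        = ((a : ℝ≥0∞)).toReal • ∫ x, g x ∂(φ₁ : Measure Y)
          + (((1 - a : ℝ≥0) : ℝ≥0∞)).toReal • ∫ x, g x ∂(φ₂ : Measure Y) := by
      rw [hψ', integral_add_measure (hint1.smul_measure ENNReal.coe_ne_top)
        (hint2.smul_measure ENNReal.coe_ne_top), integral_smul_measure, integral_smul_measure]
    rw [key]
    have s1 : ((a : ℝ≥0∞)).toReal • ∫ x, g x ∂(φ₁ : Measure Y) ≤ 0 :=
      smul_nonpos_of_nonneg_of_nonpos ENNReal.toReal_nonneg (h₁ g hg)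
    have s2 : (((1 - a : ℝ≥0) : ℝ≥0∞)).toReal • ∫ x, g x ∂(φ₂ : Measure Y) ≤ 0 :=
      smul_nonpos_of_nonneg_of_nonpos ENNReal.toReal_nonneg (h₂ g hg)
    linarith [s1, s2]
  · -- closed
    have : {φ : ProbabilityMeasure Y | ∀ g ∈ G, ∫ x, g x ∂(φ : Measure Y) ≤ 0}
        = ⋂ g ∈ G, {φ : ProbabilityMeasure Y | ∫ x, g x ∂(φ : Measure Y) ≤ 0} := by
      ext φ; simp
    rw [this]
    refine isClosed_biInter fun g _ => ?_
    exact IsClosed.preimage (continuous_integral_cm g) isClosed_Iic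
  · -- recovery
    ext g
    simp only [mem_setOf_eq]
    constructor
    · intro hgG φ hφ
      exact hφ g hgG
    · intro h
      by_contra hg
      obtain ⟨φ, hφ1, hφ2⟩ := separation hG g hg
      have := h φ hφ1
      linarith
end
end FinalAux
end
end
end

section
/- Let V be a nonempty set and s : V → C(𝒴) a scoring function whose superprediction set spr(s) := {g ∈ C(𝒴) : s_c ≤ g pointwise for some c ∈ V} is convex. Fix γ ∈ V and suppose the level set L_γ := {φ ∈ Δ(𝒴) : ∫ s_γ dφ ≤ ∫ s_c dφ for all c ∈ V} is nonempty. Then the closure in the supremum norm of the set {g ∈ C(𝒴) : g ≤ β(s_γ − s_c) pointwise for some β ≥ 0 and some c ∈ V} equals the set of available gambles 𝒢_{L_γ} := {g ∈ C(𝒴) : ∫ g dφ ≤ 0 for all φ ∈ L_γ}. -/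
set_option linter.unusedSectionVars false
set_option linter.unusedVariables false

open MeasureTheory TopologicalSpace Set
open scoped ENNReal NNReal

namespace Stmt6Aux

variable {Y : Type*} [TopologicalSpace Y] [CompactSpace Y]

section Content

variable (f : ContinuousMap Y ℝ →L[ℝ] ℝ)

/-- admissible test functions for a set -/
def adm (K : Set Y) : Set (ContinuousMap Y ℝ) :=
  {h | (∀ x, 0 ≤ h x) ∧ ∀ x ∈ K, 1 ≤ h x}

lemma one_mem_adm (K : Set Y) : (1 : ContinuousMap Y ℝ) ∈ adm K :=
  ⟨fun _ => zero_le_one, fun _ _ => le_refl 1⟩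

lemma adm_mono {K₁ K₂ : Set Y} (h : K₁ ⊆ K₂) : adm K₂ ⊆ adm K₁ :=
  fun g hg => ⟨hg.1, fun x hx => hg.2 x (h hx)⟩

variable (hpos : ∀ h : ContinuousMap Y ℝ, (∀ x, 0 ≤ h x) → 0 ≤ f h)

/-- the pre-content -/
noncomputable def lam (K : Set Y) : ℝ := sInf (f '' adm K)

include hpos

lemma lam_lb (K : Set Y) : ∀ r ∈ f '' adm K, (0:ℝ) ≤ r := by
  rintro r ⟨h, hh, rfl⟩
  exact hpos h hh.1

lemma lam_nonneg (K : Set Y) : 0 ≤ lam f K :=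
  le_csInf ⟨f 1, 1, one_mem_adm K, rfl⟩ (lam_lb f hpos K)

lemma lam_le {K : Set Y} {h : ContinuousMap Y ℝ} (hh : h ∈ adm K) : lam f K ≤ f h :=
  csInf_le ⟨0, lam_lb f hpos K⟩ ⟨h, hh, rfl⟩

lemma le_lam {K : Set Y} {r : ℝ} (hr : ∀ h ∈ adm K, r ≤ f h) : r ≤ lam f K :=
  le_csInf ⟨f 1, 1, one_mem_adm K, rfl⟩ (by rintro b ⟨h, hh, rfl⟩; exact hr h hh)

lemma lam_mono {K₁ K₂ : Set Y} (h : K₁ ⊆ K₂) : lam f K₁ ≤ lam f K₂ :=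
  le_csInf ⟨f 1, 1, one_mem_adm K₂, rfl⟩
    (by rintro b ⟨g, hg, rfl⟩; exact lam_le f hpos (adm_mono h hg))

lemma lam_union_le (K₁ K₂ : Set Y) : lam f (K₁ ∪ K₂) ≤ lam f K₁ + lam f K₂ := by
  refine le_of_forall_pos_le_add fun ε hε => ?_
  have hne₁ : (f '' adm K₁).Nonempty := ⟨f 1, 1, one_mem_adm K₁, rfl⟩
  have hne₂ : (f '' adm K₂).Nonempty := ⟨f 1, 1, one_mem_adm K₂, rfl⟩
  obtain ⟨r₁, ⟨h₁, hh₁, rfl⟩, hr₁⟩ :=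
    exists_lt_of_csInf_lt hne₁ (lt_add_of_pos_right (lam f K₁) (half_pos hε))
  obtain ⟨r₂, ⟨h₂, hh₂, rfl⟩, hr₂⟩ :=
    exists_lt_of_csInf_lt hne₂ (lt_add_of_pos_right (lam f K₂) (half_pos hε))
  have hmem : h₁ + h₂ ∈ adm (K₁ ∪ K₂) := by
    constructor
    · intro x; exact add_nonneg (hh₁.1 x) (hh₂.1 x)
    · rintro x (hx | hx)
      · calc (1:ℝ) ≤ h₁ x := hh₁.2 x hx
          _ ≤ h₁ x + h₂ x := le_add_of_nonneg_right (hh₂.1 x)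
        -- goal : 1 ≤ (h₁ + h₂) x
      · calc (1:ℝ) ≤ h₂ x := hh₂.2 x hx
          _ ≤ h₁ x + h₂ x := le_add_of_nonneg_left (hh₁.1 x)
  have := lam_le f hpos hmem
  rw [map_add] at this
  linarith

lemma lam_disjoint [T2Space Y] [NormalSpace Y] {K₁ K₂ : Set Y}
    (hK₁ : IsClosed K₁) (hK₂ : IsClosed K₂) (hd : Disjoint K₁ K₂) :
    lam f (K₁ ∪ K₂) = lam f K₁ + lam f K₂ := by
  refine le_antisymm (lam_union_le f hpos K₁ K₂) ?_
  refine le_lam f hpos fun h hh => ?_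
  obtain ⟨u, hu0, hu1, hu01⟩ := exists_continuous_zero_one_of_isClosed hK₂ hK₁ hd.symm
  have hmem₁ : h * u ∈ adm K₁ := by
    refine ⟨fun x => mul_nonneg (hh.1 x) (hu01 x).1, fun x hx => ?_⟩
    have : u x = 1 := hu1 hx
    have h1 : (1:ℝ) ≤ h x := hh.2 x (Or.inl hx)
    simpa [ContinuousMap.mul_apply, this] using h1
  have hmem₂ : h * (1 - u) ∈ adm K₂ := by
    refine ⟨fun x => mul_nonneg (hh.1 x) (by simpa using (hu01 x).2), fun x hx => ?_⟩
    have : u x = 0 := hu0 hx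
    have h1 : (1:ℝ) ≤ h x := hh.2 x (Or.inr hx)
    simpa [this] using h1
  have hsum : h * u + h * (1 - u) = h := by ext x; simp; ring
  have := add_le_add (lam_le f hpos hmem₁) (lam_le f hpos hmem₂)
  rw [← map_add, hsum] at this
  exact this

variable [T2Space Y] [NormalSpace Y]

/-- The content induced by a positive functional. -/
noncomputable def cont : Content Y where
  toFun K := NNReal.mk (lam f K) (lam_nonneg f hpos K)
  mono' K₁ K₂ h := by
    rw [← NNReal.coe_le_coe]
    exact lam_mono f hpos h
  sup_disjoint' K₁ K₂ hd h₁ h₂ := by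
    rw [← NNReal.coe_inj]
    push_cast
    simpa using lam_disjoint f hpos h₁ h₂ hd
  sup_le' K₁ K₂ := by
    rw [← NNReal.coe_le_coe]
    push_cast
    simpa using lam_union_le f hpos K₁ K₂

variable [MeasurableSpace Y] [BorelSpace Y]

lemma coe_cont (K : Compacts Y) :
    (((cont f hpos).toFun K : NNReal) : ENNReal) = ENNReal.ofReal (lam f (K : Set Y)) := by
  simp only [cont, ENNReal.ofReal, Real.toNNReal_of_nonneg (lam_nonneg f hpos _)]

lemma cont_measure_univ :
    (cont f hpos).measure univ = ENNReal.ofReal (lam f univ) := by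
  rw [Content.measure_apply _ MeasurableSet.univ,
    (cont f hpos).outerMeasure_of_isOpen univ isOpen_univ,
    Content.innerContent_of_isCompact _ isCompact_univ isOpen_univ]
  exact coe_cont f hpos ⟨univ, isCompact_univ⟩

lemma cont_measure_le_of_adm {K U : Set Y} (hKm : MeasurableSet K) (hU : IsOpen U)
    (hKU : K ⊆ U) {v : ContinuousMap Y ℝ} (hv : v ∈ adm U) :
    (cont f hpos).measure K ≤ ENNReal.ofReal (f v) := by
  rw [Content.measure_apply _ hKm]
  refine le_trans (measure_mono hKU) ?_
  rw [(cont f hpos).outerMeasure_of_isOpen U hU]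
  refine iSup₂_le fun K' hK' => ?_
  rw [show ((cont f hpos) K' : ENNReal) = ((cont f hpos).toFun K' : ENNReal) from rfl,
    coe_cont f hpos K']
  exact ENNReal.ofReal_le_ofReal (lam_le f hpos (adm_mono hK' hv))

lemma f_mono {g h : ContinuousMap Y ℝ} (hgh : ∀ x, g x ≤ h x) : f g ≤ f h := by
  have := hpos (h - g) (fun x => by simpa using hgh x)
  rw [map_sub] at this
  linarith

lemma lam_univ (hf1 : f 1 = 1) : lam f (univ : Set Y) = 1 := by
  refine le_antisymm (le_of_le_of_eq (lam_le f hpos (one_mem_adm univ)) hf1) ?_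
  refine le_lam f hpos fun h hh => ?_
  rw [← hf1]
  exact f_mono f hpos fun x => by simpa using hh.2 x (mem_univ x)

lemma isProbability (hf1 : f 1 = 1) :
    IsProbabilityMeasure (cont f hpos).measure := by
  constructor
  rw [cont_measure_univ f hpos, lam_univ f hpos hf1]
  simp

omit hpos in
lemma staircase (N : ℕ) (s : ℝ) :
    ∑ i ∈ Finset.range N, min 1 (max 0 (s - i)) ≤ max 0 s := by
  induction N generalizing s with
  | zero => simp
  | succ n ih =>
    rw [Finset.sum_range_succ']
    have h1 : ∑ i ∈ Finset.range n, min 1 (max 0 (s - ((i:ℕ)+1:ℕ))) =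
        ∑ i ∈ Finset.range n, min 1 (max 0 ((s - 1) - i)) := by
      refine Finset.sum_congr rfl fun i _ => ?_
      congr 2
      push_cast
      ring
    rw [h1]
    have h2 := ih (s - 1)
    have h3 : max 0 (s - 1) + min 1 (max 0 (s - ((0:ℕ):ℝ))) ≤ max 0 s := by
      rcases le_total s 0 with hs | hs
      · rw [max_eq_left (by linarith), max_eq_left (by simpa using hs),
          max_eq_left hs, min_eq_right (by simp)]
        simp
      rcases le_total s 1 with hs1 | hs1
      · rw [max_eq_left (by linarith), max_eq_right (by simpa using hs),
          max_eq_right hs, min_eq_right (by simpa using hs1)]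
        simp
      · rw [max_eq_right (by linarith), max_eq_right (by simpa using hs),
          max_eq_right hs, min_eq_left (by simpa using hs1)]
        linarith
    calc ∑ i ∈ Finset.range n, min 1 (max 0 ((s - 1) - i))
          + min 1 (max 0 (s - ((0:ℕ):ℝ)))
        ≤ max 0 (s - 1) + min 1 (max 0 (s - ((0:ℕ):ℝ))) := by gcongr
      _ ≤ max 0 s := h3

lemma integral_le_of_nonneg (hf1 : f 1 = 1) (h : ContinuousMap Y ℝ)
    (hh : ∀ x, 0 ≤ h x) {δ : ℝ} (hδ : 0 < δ) :
    ∫ x, h x ∂ (cont f hpos).measure ≤ f h + 2 * δ := by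
  set μ := (cont f hpos).measure with hμ
  haveI : IsProbabilityMeasure μ := isProbability f hpos hf1
  set M := ⌈‖h‖ / δ⌉₊ with hM
  set N := M + 1 with hNM
  have hN : ∀ x, h x < N * δ := by
    intro x
    have h1 : h x ≤ ‖h‖ := le_trans (le_abs_self _) (h.norm_coe_le_norm x)
    have h2 : ‖h‖ / δ ≤ (M:ℝ) := Nat.le_ceil _
    have : ‖h‖ ≤ (M:ℝ) * δ := by
      rw [div_le_iff₀ hδ] at h2
      linarith
    have : ((N:ℕ):ℝ) = (M:ℝ) + 1 := by push_cast [hNM]; ring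
    nlinarith
  set K : ℕ → Set Y := fun i => {x | (i:ℝ) * δ ≤ h x} with hK
  have hKc : ∀ i, IsClosed (K i) := fun i =>
    isClosed_le continuous_const h.continuous
  set v : ℕ → ContinuousMap Y ℝ := fun i =>
    ⟨fun x => min 1 (max 0 ((2/δ) * (h x - i*δ) + 2)),
      (continuous_const.min ((continuous_const.max
        ((continuous_const.mul (h.continuous.sub continuous_const)).add
          continuous_const))))⟩ with hv
  have hv0 : ∀ i x, 0 ≤ v i x := fun i x => le_min zero_le_one (le_max_left 0 _)
  have hvadm : ∀ i : ℕ, v i ∈ adm {x | (i:ℝ)*δ - δ/2 < h x} := by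
    intro i
    refine ⟨hv0 i, fun x hx => ?_⟩
    have hx' : (i:ℝ)*δ - δ/2 < h x := hx
    have ht : (1:ℝ) ≤ (2/δ) * (h x - i*δ) + 2 := by
      have h2δ : 0 < 2/δ := by positivity
      have hstep := mul_le_mul_of_nonneg_left
        (by linarith : -(δ/2) ≤ h x - i*δ) h2δ.le
      have : (2/δ) * (-(δ/2)) = -1 := by field_simp
      linarith
    exact le_min le_rfl (le_max_of_le_right ht)
  have hvsum : ∀ x, ∑ i ∈ Finset.range N, v (i+1) x ≤ h x / δ + 1 := by
    intro x
    have heach : ∀ i : ℕ, v (i+1) x ≤ min 1 (max 0 ((h x/δ + 1) - i)) := by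
      intro i
      rcases le_total ((i:ℝ)+1) (h x/δ) with hc | hc
      · have : (1:ℝ) ≤ (h x/δ + 1) - i := by linarith
        rw [min_eq_left (by rw [max_eq_right]; exacts [this, by linarith])]
        show min 1 _ ≤ 1
        exact min_le_left _ _
      · have hle : (2/δ) * (h x - ((i:ℕ)+1:ℕ)*δ) + 2 ≤ (h x/δ + 1) - i := by
          have : (2/δ) * (h x - ((i:ℕ)+1:ℕ)*δ) = 2 * (h x / δ) - 2*((i:ℝ)+1) := by
            push_cast
            field_simp
          rw [this]
          push_cast
          linarith
        exact min_le_min le_rfl (max_le_max le_rfl hle)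
    calc ∑ i ∈ Finset.range N, v (i+1) x
        ≤ ∑ i ∈ Finset.range N, min 1 (max 0 ((h x/δ + 1) - i)) :=
          Finset.sum_le_sum fun i _ => heach i
      _ ≤ max 0 (h x/δ + 1) := staircase N _
      _ = h x/δ + 1 := max_eq_right
          (by have := div_nonneg (hh x) hδ.le; linarith)
  have hlower : ∀ x, h x ≤ δ * ∑ i ∈ Finset.range N,
      Set.indicator (K i) (fun _ => (1:ℝ)) x := by
    intro x
    set k := ⌊h x / δ⌋₊ with hk
    have hkN : k + 1 ≤ N := by
      have h1 : (k:ℝ) * δ ≤ h x := by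
        have hfl : (k:ℝ) ≤ h x / δ := Nat.floor_le (div_nonneg (hh x) hδ.le)
        calc (k:ℝ) * δ ≤ (h x / δ) * δ := mul_le_mul_of_nonneg_right hfl hδ.le
          _ = h x := by field_simp
      have h2 : (k:ℝ) < (N:ℝ) := (mul_lt_mul_iff_left₀ hδ).mp (lt_of_le_of_lt h1 (hN x))
      exact_mod_cast h2
    have hmem : ∀ i ∈ Finset.range (k+1),
        Set.indicator (K i) (fun _ => (1:ℝ)) x = 1 := by
      intro i hi
      rw [Set.indicator_of_mem]
      show (i:ℝ) * δ ≤ h x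
      have hik : (i:ℝ) ≤ (k:ℝ) := by
        exact_mod_cast Nat.lt_succ_iff.mp (Finset.mem_range.mp hi)
      have := Nat.floor_le (div_nonneg (hh x) hδ.le)
      rw [← hk] at this
      calc (i:ℝ) * δ ≤ (k:ℝ) * δ := mul_le_mul_of_nonneg_right hik hδ.le
        _ ≤ (h x / δ) * δ := mul_le_mul_of_nonneg_right this hδ.le
        _ = h x := by field_simp
    have hsumge : ((k:ℝ) + 1) ≤ ∑ i ∈ Finset.range N,
        Set.indicator (K i) (fun _ => (1:ℝ)) x := by
      have : ∑ i ∈ Finset.range (k+1),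
          Set.indicator (K i) (fun _ => (1:ℝ)) x = ((k:ℝ)+1) := by
        rw [Finset.sum_congr rfl hmem]
        simp
      rw [← this]
      refine Finset.sum_le_sum_of_subset_of_nonneg
        (Finset.range_subset_range.mpr hkN) fun i _ _ => ?_
      exact Set.indicator_nonneg (fun _ _ => zero_le_one) x
    have hxk : h x < δ * ((k:ℝ)+1) := by
      have := Nat.lt_floor_add_one (h x / δ)
      rw [← hk] at this
      calc h x = (h x / δ) * δ := by field_simp
        _ < ((k:ℝ)+1) * δ := (mul_lt_mul_iff_left₀ hδ).mpr this
        _ = δ * ((k:ℝ)+1) := by ring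
    calc h x ≤ δ * ((k:ℝ)+1) := hxk.le
      _ ≤ δ * ∑ i ∈ Finset.range N, Set.indicator (K i) (fun _ => (1:ℝ)) x :=
        mul_le_mul_of_nonneg_left hsumge hδ.le
  -- integrability
  have hint_h : Integrable (fun x => h x) μ :=
    h.continuous.integrable_of_hasCompactSupport
      (HasCompactSupport.of_compactSpace _)
  have hint_ind : ∀ i : ℕ, Integrable
      (Set.indicator (K i) (fun _ => (1:ℝ))) μ :=
    fun i => (integrable_const (1:ℝ)).indicator (hKc i).measurableSet
  have hint_sum : Integrable (fun x => δ * ∑ i ∈ Finset.range N,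
      Set.indicator (K i) (fun _ => (1:ℝ)) x) μ := by
    apply Integrable.const_mul
    exact integrable_finset_sum _ fun i _ => hint_ind i
  have step1 : ∫ x, h x ∂μ ≤ ∫ x, δ * ∑ i ∈ Finset.range N,
      Set.indicator (K i) (fun _ => (1:ℝ)) x ∂μ :=
    integral_mono hint_h hint_sum hlower
  have step2 : ∫ x, δ * ∑ i ∈ Finset.range N,
      Set.indicator (K i) (fun _ => (1:ℝ)) x ∂μ
      = δ * ∑ i ∈ Finset.range N, (μ (K i)).toReal := by
    rw [MeasureTheory.integral_const_mul]
    congr 1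
    rw [integral_finset_sum _ fun i _ => hint_ind i]
    refine Finset.sum_congr rfl fun i _ => ?_
    rw [integral_indicator_const (1:ℝ) (hKc i).measurableSet]
    simp [Measure.real]
  have hK0 : (μ (K 0)).toReal ≤ 1 := by
    have h1 : μ (K 0) ≤ 1 := prob_le_one
    calc (μ (K 0)).toReal ≤ (1:ℝ≥0∞).toReal :=
        ENNReal.toReal_mono (by simp) h1
      _ = 1 := by simp
  have hKi : ∀ i : ℕ, (μ (K (i+1))).toReal ≤ f (v (i+1)) := by
    intro i
    have hUopen : IsOpen {x : Y | ((i:ℝ)+1)*δ - δ/2 < h x} :=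
      isOpen_lt continuous_const h.continuous
    have hKU : K (i+1) ⊆ {x : Y | ((i:ℝ)+1)*δ - δ/2 < h x} := by
      intro x hx
      have : (((i:ℕ)+1:ℕ):ℝ) * δ ≤ h x := hx
      push_cast at this
      show ((i:ℝ)+1)*δ - δ/2 < h x
      linarith
    have hvU : v (i+1) ∈ adm {x : Y | ((i:ℝ)+1)*δ - δ/2 < h x} := by
      have := hvadm (i+1)
      convert this using 3
      push_cast
      ring
    have hb := cont_measure_le_of_adm f hpos (hKc (i+1)).measurableSet
      hUopen hKU hvU
    calc (μ (K (i+1))).toReal ≤ (ENNReal.ofReal (f (v (i+1)))).toReal :=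
        ENNReal.toReal_mono (by simp) hb
      _ = f (v (i+1)) := ENNReal.toReal_ofReal (hpos _ (hv0 (i+1)))
  have step3 : ∑ i ∈ Finset.range N, (μ (K i)).toReal
      ≤ 1 + ∑ i ∈ Finset.range N, f (v (i+1)) := by
    rw [Finset.sum_range_succ']
    have hle1 : ∑ i ∈ Finset.range M, (μ (K (i+1))).toReal
        ≤ ∑ i ∈ Finset.range M, f (v (i+1)) :=
      Finset.sum_le_sum fun i _ => hKi i
    have hle2 : ∑ i ∈ Finset.range M, f (v (i+1))
        ≤ ∑ i ∈ Finset.range N, f (v (i+1)) :=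
      Finset.sum_le_sum_of_subset_of_nonneg
        (Finset.range_subset_range.mpr (by omega)) fun i _ _ => hpos _ (hv0 (i+1))
    have := hK0
    push_cast
    linarith
  have step4 : ∑ i ∈ Finset.range N, f (v (i+1)) ≤ (f h + δ) / δ := by
    have hmap : ∑ i ∈ Finset.range N, f (v (i+1))
        = f (∑ i ∈ Finset.range N, v (i+1)) := (map_sum f _ _).symm
    rw [hmap]
    have hpt : ∀ x, (∑ i ∈ Finset.range N, v (i+1)) x ≤ ((1/δ) • (h + δ • (1:ContinuousMap Y ℝ))) x := by
      intro x
      have h1 := hvsum x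
      have : (∑ i ∈ Finset.range N, v (i+1)) x = ∑ i ∈ Finset.range N, v (i+1) x := by
        simp
      rw [this]
      have : ((1/δ) • (h + δ • (1:ContinuousMap Y ℝ))) x = (1/δ) * (h x + δ) := by
        simp
        ring
      rw [this]
      rw [div_add' _ _ _ (ne_of_gt hδ)] at h1
      calc ∑ i ∈ Finset.range N, v (i+1) x ≤ (h x + 1 * δ)/δ := by
            simpa using h1
        _ = (1/δ) * (h x + δ) := by field_simp
    have := f_mono f hpos hpt
    rw [_root_.map_smul, map_add, _root_.map_smul, hf1] at this
    rw [smul_eq_mul, smul_eq_mul] at this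
    calc f (∑ i ∈ Finset.range N, v (i+1)) ≤ (1/δ) * (f h + δ * 1) := this
      _ = (f h + δ)/δ := by field_simp
  calc ∫ x, h x ∂μ ≤ δ * ∑ i ∈ Finset.range N, (μ (K i)).toReal :=
        le_of_le_of_eq step1 step2
    _ ≤ δ * (1 + ∑ i ∈ Finset.range N, f (v (i+1))) :=
        mul_le_mul_of_nonneg_left (by linarith [step3]) hδ.le
    _ ≤ δ * (1 + (f h + δ)/δ) :=
        mul_le_mul_of_nonneg_left (by linarith [step4]) hδ.le
    _ = f h + 2 * δ := by field_simp; ring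

lemma integral_le (hf1 : f 1 = 1) (h : ContinuousMap Y ℝ) :
    ∫ x, h x ∂ (cont f hpos).measure ≤ f h := by
  set μ := (cont f hpos).measure with hμ
  haveI : IsProbabilityMeasure μ := isProbability f hpos hf1
  set c := ‖h‖ with hc
  have hpt : ∀ x, 0 ≤ (h + c • (1:ContinuousMap Y ℝ)) x := by
    intro x
    have := abs_le.mp (le_trans le_rfl (h.norm_coe_le_norm x))
    simp only [ContinuousMap.add_apply, ContinuousMap.smul_apply,
      ContinuousMap.one_apply, smul_eq_mul, mul_one]
    linarith [this.1]
  have hint : Integrable (fun x => h x) μ :=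
    h.continuous.integrable_of_hasCompactSupport (HasCompactSupport.of_compactSpace _)
  have key : ∀ δ : ℝ, 0 < δ → ∫ x, h x ∂μ ≤ f h + 2 * δ := by
    intro δ hδ
    have h1 := integral_le_of_nonneg f hpos hf1 (h + c • (1:ContinuousMap Y ℝ)) hpt hδ
    have h2 : ∫ x, (h + c • (1:ContinuousMap Y ℝ)) x ∂μ = (∫ x, h x ∂μ) + c := by
      have : (fun x => (h + c • (1:ContinuousMap Y ℝ)) x) = fun x => h x + c := by
        ext x; simp
      rw [this, integral_add hint (integrable_const c), integral_const]
      simp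
    have h3 : f (h + c • (1:ContinuousMap Y ℝ)) = f h + c := by
      rw [map_add, _root_.map_smul, hf1, smul_eq_mul, mul_one]
    rw [← hμ] at h1
    rw [h2, h3] at h1
    linarith
  refine le_of_forall_pos_le_add fun ε hε => ?_
  have := key (ε/2) (by linarith)
  linarith

/-- Riesz-Markov-Kakutani-type existence result: a positive normalized functional
dominates integration against some Borel probability measure. -/
theorem exists_prob (hf1 : f 1 = 1) :
    ∃ μ : Measure Y, IsProbabilityMeasure μ ∧
      ∀ h : ContinuousMap Y ℝ, ∫ x, h x ∂μ ≤ f h :=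
  ⟨(cont f hpos).measure, isProbability f hpos hf1, integral_le f hpos hf1⟩

end Content

end Stmt6Aux


open MeasureTheory Stmt6Aux


/-- Available gambles of forecasts of elicitable properties: if the superprediction set of
the scoring function `s` is convex and the level set `L_γ` is nonempty, then the sup-norm
closure of the set of gambles dominated by some scaled regret gamble `β (s_γ − s_c)`
equals the set of available gambles for `L_γ`. -/
theorem stmt6 {Y : Type*} [TopologicalSpace Y] [CompactSpace Y]
    [TopologicalSpace.MetrizableSpace Y] [MeasurableSpace Y] [BorelSpace Y]
    {V : Type*} [Nonempty V] (s : V → ContinuousMap Y ℝ)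
    (hsprconv : Convex ℝ {g : ContinuousMap Y ℝ | ∃ c : V, ∀ x, s c x ≤ g x})
    (γ : V)
    (hne : {φ : ProbabilityMeasure Y |
      ∀ c : V, ∫ x, s γ x ∂(φ : Measure Y) ≤ ∫ x, s c x ∂(φ : Measure Y)}.Nonempty) :
    closure {g : ContinuousMap Y ℝ |
        ∃ β : ℝ, 0 ≤ β ∧ ∃ c : V, ∀ x, g x ≤ β * (s γ x - s c x)}
      = {g : ContinuousMap Y ℝ |
          ∀ φ ∈ {φ : ProbabilityMeasure Y |
            ∀ c : V, ∫ x, s γ x ∂(φ : Measure Y) ≤ ∫ x, s c x ∂(φ : Measure Y)},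
            ∫ x, g x ∂(φ : Measure Y) ≤ 0} := by
  haveI : T2Space Y := by
    letI := TopologicalSpace.metrizableSpaceMetric Y
    infer_instance
  haveI : NormalSpace Y := by
    letI := TopologicalSpace.metrizableSpaceMetric Y
    infer_instance
  set Kset : Set (ContinuousMap Y ℝ) :=
    {g | ∃ β : ℝ, 0 ≤ β ∧ ∃ c : V, ∀ x, g x ≤ β * (s γ x - s c x)} with hKset
  set L : Set (ProbabilityMeasure Y) :=
    {φ | ∀ c : V, ∫ x, s γ x ∂(φ : Measure Y) ≤ ∫ x, s c x ∂(φ : Measure Y)} with hL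
  -- integrability of continuous maps against probability measures
  have hint : ∀ (g : ContinuousMap Y ℝ) (φ : ProbabilityMeasure Y),
      Integrable (fun x => g x) (φ : Measure Y) := fun g φ =>
    g.continuous.integrable_of_hasCompactSupport (HasCompactSupport.of_compactSpace _)
  -- Part 1 : closure Kset ⊆ G
  have hKsub : Kset ⊆ {g : ContinuousMap Y ℝ | ∀ φ ∈ L, ∫ x, g x ∂(φ : Measure Y) ≤ 0} := by
    rintro g ⟨β, hβ, c, hβc⟩ φ hφ
    have h1 : ∫ x, g x ∂(φ : Measure Y) ≤ ∫ x, β * (s γ x - s c x) ∂(φ : Measure Y) :=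
      integral_mono (hint g φ) (by
        have : Integrable (fun x => s γ x - s c x) (φ : Measure Y) :=
          (hint (s γ) φ).sub (hint (s c) φ)
        exact this.const_mul β) hβc
    have h2 : ∫ x, β * (s γ x - s c x) ∂(φ : Measure Y)
        = β * ((∫ x, s γ x ∂(φ : Measure Y)) - ∫ x, s c x ∂(φ : Measure Y)) := by
      rw [MeasureTheory.integral_const_mul, integral_sub (hint (s γ) φ) (hint (s c) φ)]
    have h3 := hφ c
    have : β * ((∫ x, s γ x ∂(φ : Measure Y)) - ∫ x, s c x ∂(φ : Measure Y)) ≤ 0 :=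
      mul_nonpos_of_nonneg_of_nonpos hβ (by linarith)
    linarith [h1, h2 ▸ h1]
  have hGclosed : IsClosed {g : ContinuousMap Y ℝ | ∀ φ ∈ L, ∫ x, g x ∂(φ : Measure Y) ≤ 0} := by
    have heq : {g : ContinuousMap Y ℝ | ∀ φ ∈ L, ∫ x, g x ∂(φ : Measure Y) ≤ 0}
        = ⋂ φ ∈ L, (fun g : ContinuousMap Y ℝ => ∫ x, g x ∂(φ : Measure Y)) ⁻¹' Set.Iic 0 := by
      ext g; simp [Set.mem_iInter]
    rw [heq]
    refine isClosed_biInter fun φ hφ => IsClosed.preimage ?_ isClosed_Iic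
    have hlip : LipschitzWith 1 (fun g : ContinuousMap Y ℝ => ∫ x, g x ∂(φ : Measure Y)) := by
      refine LipschitzWith.of_dist_le_mul fun g₁ g₂ => ?_
      rw [Real.dist_eq, ← integral_sub (hint g₁ φ) (hint g₂ φ)]
      have hb : ∀ x, ‖g₁ x - g₂ x‖ ≤ dist g₁ g₂ := by
        intro x
        have := ContinuousMap.dist_apply_le_dist (f := g₁) (g := g₂) x
        rwa [Real.dist_eq, ← Real.norm_eq_abs] at this
      calc |∫ x, (g₁ x - g₂ x) ∂(φ : Measure Y)|
          ≤ dist g₁ g₂ * ((φ : Measure Y) Set.univ).toReal :=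
            norm_integral_le_of_norm_le_const (Filter.Eventually.of_forall hb)
        _ = 1 * dist g₁ g₂ := by simp
    exact hlip.continuous
  refine le_antisymm (closure_minimal hKsub hGclosed) ?_
  -- Part 2 : G ⊆ closure Kset
  intro g hg
  by_contra hnot
  -- convexity of Kset
  have hconv : Convex ℝ Kset := by
    rintro g₁ ⟨β₁, hβ₁, c₁, hc₁⟩ g₂ ⟨β₂, hβ₂, c₂, hc₂⟩ a b ha hb hab
    have hβ : 0 ≤ a * β₁ + b * β₂ := by positivity
    rcases eq_or_lt_of_le hβ with hβ0 | hβpos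
    · -- degenerate case : β = 0
      have hA : a * β₁ = 0 := by nlinarith [mul_nonneg ha hβ₁, mul_nonneg hb hβ₂]
      have hB : b * β₂ = 0 := by nlinarith [mul_nonneg ha hβ₁, mul_nonneg hb hβ₂]
      refine ⟨0, le_rfl, c₁, fun x => ?_⟩
      have e1 : a * g₁ x ≤ a * (β₁ * (s γ x - s c₁ x)) :=
        mul_le_mul_of_nonneg_left (hc₁ x) ha
      have e2 : b * g₂ x ≤ b * (β₂ * (s γ x - s c₂ x)) :=
        mul_le_mul_of_nonneg_left (hc₂ x) hb
      have hz1 : a * (β₁ * (s γ x - s c₁ x)) = 0 := by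
        have hr : a * (β₁ * (s γ x - s c₁ x)) = (a*β₁) * (s γ x - s c₁ x) := by ring
        rw [hr, hA, zero_mul]
      have hz2 : b * (β₂ * (s γ x - s c₂ x)) = 0 := by
        have hr : b * (β₂ * (s γ x - s c₂ x)) = (b*β₂) * (s γ x - s c₂ x) := by ring
        rw [hr, hB, zero_mul]
      have : (a • g₁ + b • g₂) x = a * g₁ x + b * g₂ x := by simp
      rw [this, zero_mul]
      linarith [e1, e2]
    · -- main case : β > 0
      set β := a * β₁ + b * β₂ with hβdef
      have hu : ((a * β₁ / β) • s c₁ + (b * β₂ / β) • s c₂) ∈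
          {g : ContinuousMap Y ℝ | ∃ c : V, ∀ x, s c x ≤ g x} := by
        refine hsprconv ⟨c₁, fun x => le_rfl⟩ ⟨c₂, fun x => le_rfl⟩
          (by positivity) (by positivity) ?_
        field_simp
        exact hβdef.symm
      obtain ⟨c₃, hc₃⟩ := hu
      refine ⟨β, hβ, c₃, fun x => ?_⟩
      have e1 : a * g₁ x ≤ a * (β₁ * (s γ x - s c₁ x)) :=
        mul_le_mul_of_nonneg_left (hc₁ x) ha
      have e2 : b * g₂ x ≤ b * (β₂ * (s γ x - s c₂ x)) :=
        mul_le_mul_of_nonneg_left (hc₂ x) hb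
      have e3 := hc₃ x
      have e4 : ((a * β₁ / β) • s c₁ + (b * β₂ / β) • s c₂) x
          = (a * β₁ / β) * s c₁ x + (b * β₂ / β) * s c₂ x := by simp
      rw [e4] at e3
      have e5 : β * ((a * β₁ / β) * s c₁ x + (b * β₂ / β) * s c₂ x)
          = a * β₁ * s c₁ x + b * β₂ * s c₂ x := by
        field_simp
      have e6 : β * s c₃ x ≤ β * ((a * β₁ / β) * s c₁ x + (b * β₂ / β) * s c₂ x) :=
        mul_le_mul_of_nonneg_left e3 hβ
      rw [e5] at e6
      have : (a • g₁ + b • g₂) x = a * g₁ x + b * g₂ x := by simp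
      rw [this, hβdef] at *
      rw [hβdef]
      calc a * g₁ x + b * g₂ x
          ≤ a * (β₁ * (s γ x - s c₁ x)) + b * (β₂ * (s γ x - s c₂ x)) :=
            add_le_add e1 e2
        _ = (a * β₁ + b * β₂) * s γ x
            - (a * β₁ * s c₁ x + b * β₂ * s c₂ x) := by ring
        _ ≤ (a * β₁ + b * β₂) * s γ x - (a * β₁ + b * β₂) * s c₃ x := by
            linarith [e6]
        _ = (a * β₁ + b * β₂) * (s γ x - s c₃ x) := by ring
  -- separation
  obtain ⟨f, u, hfu, hug⟩ :=
    geometric_hahn_banach_closed_point (hconv.closure) isClosed_closure hnot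
  have hfK : ∀ a ∈ Kset, f a < u := fun a ha => hfu a (subset_closure ha)
  have h0K : (0 : ContinuousMap Y ℝ) ∈ Kset :=
    ⟨0, le_rfl, Classical.arbitrary V, fun x => by simp⟩
  have hu0 : (0:ℝ) < u := by
    have := hfK 0 h0K
    simpa using this
  have hfnonpos : ∀ a ∈ Kset, f a ≤ 0 := by
    intro a ha
    by_contra hfa
    push_neg at hfa
    have hcone : ∀ t : ℝ, 0 ≤ t → t • a ∈ Kset := by
      intro t ht
      obtain ⟨β, hβ, c, hc⟩ := ha
      refine ⟨t * β, mul_nonneg ht hβ, c, fun x => ?_⟩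
      have : (t • a) x = t * a x := by simp
      rw [this]
      calc t * a x ≤ t * (β * (s γ x - s c x)) :=
            mul_le_mul_of_nonneg_left (hc x) ht
        _ = t * β * (s γ x - s c x) := by ring
    have := hfK (((u+1)/f a) • a) (hcone _ (by positivity))
    rw [_root_.map_smul, smul_eq_mul] at this
    rw [div_mul_cancel₀ _ (ne_of_gt hfa)] at this
    linarith
  have hpos : ∀ h : ContinuousMap Y ℝ, (∀ x, 0 ≤ h x) → 0 ≤ f h := by
    intro h hh
    have hmem : -h ∈ Kset := by
      refine ⟨0, le_rfl, Classical.arbitrary V, fun x => ?_⟩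
      simp [neg_nonpos]
      exact hh x
    have := hfnonpos _ hmem
    rw [map_neg] at this
    linarith
  have hf1 : 0 < f 1 := by
    rcases lt_or_eq_of_le (hpos 1 fun x => zero_le_one) with h | h
    · exact h
    · exfalso
      have hfg : f g ≤ 0 := by
        have hp : ∀ x, g x ≤ (‖g‖ • (1:ContinuousMap Y ℝ)) x := by
          intro x
          have := abs_le.mp (le_trans le_rfl (g.norm_coe_le_norm x))
          simp only [ContinuousMap.smul_apply, ContinuousMap.one_apply,
            smul_eq_mul, mul_one]
          exact this.2
        have := f_mono f hpos hp
        rw [_root_.map_smul, smul_eq_mul, ← h] at this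
        simpa using this
      linarith [hug, hu0]
  -- normalize
  set f' := (f 1)⁻¹ • f with hf'
  have hpos' : ∀ h : ContinuousMap Y ℝ, (∀ x, 0 ≤ h x) → 0 ≤ f' h := by
    intro h hh
    have : f' h = (f 1)⁻¹ * f h := by simp [hf']
    rw [this]
    exact mul_nonneg (inv_nonneg.mpr hf1.le) (hpos h hh)
  have hf'1 : f' 1 = 1 := by
    simp [hf']
    exact inv_mul_cancel₀ (ne_of_gt hf1)
  obtain ⟨μ, hμprob, hμle⟩ := exists_prob f' hpos' hf'1
  haveI := hμprob
  set φ : ProbabilityMeasure Y := ⟨μ, hμprob⟩ with hφ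
  have hcoe : (φ : Measure Y) = μ := rfl
  have hφL : φ ∈ L := by
    intro c
    have hmem : s γ - s c ∈ Kset := by
      refine ⟨1, zero_le_one, c, fun x => ?_⟩
      simp
    have h1 : f' (s γ - s c) ≤ 0 := by
      have : f' (s γ - s c) = (f 1)⁻¹ * f (s γ - s c) := by simp [hf']
      rw [this]
      exact mul_nonpos_of_nonneg_of_nonpos (inv_nonneg.mpr hf1.le)
        (hfnonpos _ hmem)
    have h2 := hμle (s γ - s c)
    have h3 : ∫ x, (s γ - s c) x ∂μ
        = (∫ x, s γ x ∂μ) - ∫ x, s c x ∂μ := by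
      have : (fun x => (s γ - s c) x) = fun x => s γ x - s c x := by ext x; simp
      rw [this, integral_sub]
      · exact (s γ).continuous.integrable_of_hasCompactSupport
          (HasCompactSupport.of_compactSpace _)
      · exact (s c).continuous.integrable_of_hasCompactSupport
          (HasCompactSupport.of_compactSpace _)
    rw [hcoe]
    rw [h3] at h2
    linarith
  have hfinal := hg φ hφL
  rw [hcoe] at hfinal
  have hneg := hμle (-g)
  have h4 : ∫ x, (-g) x ∂μ = -∫ x, g x ∂μ := by
    have : (fun x => (-g) x) = fun x => -(g x) := by ext x; simp
    rw [this, integral_neg]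
  have h5 : f' (-g) = -f' g := by rw [map_neg]
  have h6 : 0 < f' g := by
    have : f' g = (f 1)⁻¹ * f g := by simp [hf']
    rw [this]
    exact mul_pos (inv_pos.mpr hf1) (lt_trans hu0 hug)
  rw [h4, h5] at hneg
  linarith
end

section
/- Let ν_γ ∈ C(𝒴) and suppose the level set M_γ := {φ ∈ Δ(𝒴) : ∫ ν_γ dφ = 0} is nonempty. Then the closure in the supremum norm of the set {g ∈ C(𝒴) : g ≤ α ν_γ pointwise for some α ∈ ℝ} equals the set of available gambles 𝒢_{M_γ} := {g ∈ C(𝒴) : ∫ g dφ ≤ 0 for all φ ∈ M_γ}. -/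
open MeasureTheory Set

section aux
variable {Y : Type*} [TopologicalSpace Y] [CompactSpace Y]
    [TopologicalSpace.MetrizableSpace Y] [MeasurableSpace Y] [BorelSpace Y]

lemma cm_integrable' (g : C(Y, ℝ)) (μ : Measure Y) [IsFiniteMeasure μ] :
    Integrable (fun x => g x) μ := by
  have := TopologicalSpace.t2Space_of_metrizableSpace (X := Y)
  exact (BoundedContinuousFunction.mkOfCompact g).integrable μ

lemma integral_cm_continuous' (μ : Measure Y) [IsProbabilityMeasure μ] :
    Continuous fun g : C(Y, ℝ) => ∫ x, g x ∂μ := by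
  apply (LipschitzWith.of_dist_le_mul (K := 1) ?_).continuous
  intro g h
  rw [NNReal.coe_one, one_mul]
  rw [Real.dist_eq, ← integral_sub (cm_integrable' g μ) (cm_integrable' h μ)]
  calc |∫ x, (g x - h x) ∂μ| ≤ ∫ x, |g x - h x| ∂μ := by
        simpa using norm_integral_le_integral_norm (fun x => g x - h x) (μ := μ)
    _ ≤ ∫ _x, dist g h ∂μ := by
        apply integral_mono ((cm_integrable' g μ).sub (cm_integrable' h μ)).abs
          (integrable_const _)
        intro x
        simpa [Real.dist_eq] using ContinuousMap.dist_apply_le_dist (f := g) (g := h) x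
    _ = dist g h := by simp

lemma isCompact_convexHull_plane' {K : Set (ℝ × ℝ)} (hK : IsCompact K) :
    IsCompact (convexHull ℝ K) := by
  obtain rfl | ⟨x₀, hx₀⟩ := K.eq_empty_or_nonempty
  · simp
  have hD : IsCompact ((stdSimplex ℝ (Fin 3)) ×ˢ (Set.univ.pi fun _ : Fin 3 => K)) :=
    (isCompact_stdSimplex (𝕜 := ℝ) (ι := Fin 3)).prod (isCompact_univ_pi fun _ => hK)
  have hF : Continuous fun wp : (Fin 3 → ℝ) × (Fin 3 → ℝ × ℝ) => ∑ i, wp.1 i • wp.2 i := by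
    fun_prop
  have key : convexHull ℝ K =
      (fun wp : (Fin 3 → ℝ) × (Fin 3 → ℝ × ℝ) => ∑ i, wp.1 i • wp.2 i) ''
        ((stdSimplex ℝ (Fin 3)) ×ˢ (Set.univ.pi fun _ : Fin 3 => K)) := by
    apply Subset.antisymm
    · intro x hx
      obtain ⟨ι, hfin, z, w, hz, hai, hwpos, hw1, hsum⟩ :=
        eq_pos_convex_span_of_mem_convexHull hx
      have hcard : Fintype.card ι ≤ 3 := by
        have h1 := hai.card_le_finrank_succ
        have h2 : Module.finrank ℝ (vectorSpan ℝ (Set.range z)) ≤ 2 := by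
          have h3 := Submodule.finrank_le (vectorSpan ℝ (Set.range z))
          have h4 : Module.finrank ℝ (ℝ × ℝ) = 2 := by
            simp [Module.finrank_prod]
          omega
        omega
      obtain ⟨e⟩ : Nonempty (ι ↪ Fin 3) := by
        rw [Function.Embedding.nonempty_iff_card_le]
        simpa using hcard
      classical
      refine ⟨(fun j => ∑ i, if e i = j then w i else 0,
               fun j => if h : ∃ i, e i = j then z h.choose else x₀), ⟨⟨?_, ?_⟩, ?_⟩, ?_⟩
      · intro j
        exact Finset.sum_nonneg fun i _ => by split_ifs <;> simp [(hwpos i).le]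
      · rw [Finset.sum_comm]
        simp only [Finset.sum_ite_eq, Finset.mem_univ, if_true]
        exact hw1
      · intro j _
        dsimp only
        split_ifs with h
        · exact hz ⟨h.choose, rfl⟩
        · exact hx₀
      · dsimp only
        rw [← hsum]
        have hP : ∀ i : ι,
            (if h : ∃ i', e i' = e i then z h.choose else x₀) = z i := by
          intro i
          have h : ∃ i', e i' = e i := ⟨i, rfl⟩
          rw [dif_pos h]
          congr 1
          exact e.injective h.choose_spec
        calc ∑ j : Fin 3, (∑ i : ι, if e i = j then w i else 0) •
              (if h : ∃ i, e i = j then z h.choose else x₀)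
            = ∑ j : Fin 3, ∑ i : ι, (if e i = j then
                w i • (if h : ∃ i', e i' = j then z h.choose else x₀) else 0) := by
              refine Finset.sum_congr rfl fun j _ => ?_
              rw [Finset.sum_smul]
              exact Finset.sum_congr rfl fun i _ => by split_ifs <;> simp
          _ = ∑ i : ι, ∑ j : Fin 3, (if e i = j then
                w i • (if h : ∃ i', e i' = j then z h.choose else x₀) else 0) :=
              Finset.sum_comm
          _ = ∑ i : ι, w i • z i := by
              refine Finset.sum_congr rfl fun i _ => ?_
              rw [Finset.sum_ite_eq Finset.univ (e i)
                (fun j => w i • (if h : ∃ i', e i' = j then z h.choose else x₀))]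
              simp [hP i]
    · rintro _ ⟨⟨w, p⟩, ⟨⟨hw0, hw1⟩, hp⟩, rfl⟩
      exact (convex_convexHull ℝ K).sum_mem (fun i _ => hw0 i) hw1
        (fun i _ => subset_convexHull ℝ K (hp i (Set.mem_univ i)))
  rw [key]
  exact hD.image hF

lemma exists_discrete_measure' [Nonempty Y] (f : C(Y, ℝ × ℝ)) {p : ℝ × ℝ}
    (hp : p ∈ convexHull ℝ (Set.range f)) :
    ∃ φ : Measure Y, IsProbabilityMeasure φ ∧
      (∫ x, (f x).1 ∂φ) = p.1 ∧ (∫ x, (f x).2 ∂φ) = p.2 := by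
  classical
  rw [convexHull_eq] at hp
  obtain ⟨ι, t, w, z, hw0, hw1, hz, hcm⟩ := hp
  have hex : ∀ i, ∃ a : Y, i ∈ t → f a = z i := by
    intro i
    by_cases hi : i ∈ t
    · obtain ⟨a, ha⟩ := hz i hi
      exact ⟨a, fun _ => ha⟩
    · exact ⟨Classical.arbitrary Y, fun h => absurd h hi⟩
  choose y hy using hex
  set φ : Measure Y := ∑ i ∈ t, (ENNReal.ofReal (w i)) • Measure.dirac (y i) with hφ
  have hprob : IsProbabilityMeasure φ := by
    constructor
    rw [hφ, Measure.finset_sum_apply _ _ _ ]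
    simp only [Measure.smul_apply, Measure.dirac_apply_of_mem (Set.mem_univ _),
      smul_eq_mul, mul_one]
    rw [← ENNReal.ofReal_sum_of_nonneg hw0, hw1, ENNReal.ofReal_one]
  have hint : ∀ h : Y → ℝ, Continuous h → (∫ x, h x ∂φ) = ∑ i ∈ t, w i * h (y i) := by
    intro h hc
    rw [hφ, integral_finset_sum_measure ?_]
    · refine Finset.sum_congr rfl fun i hi => ?_
      rw [integral_smul_measure, integral_dirac' _ _ hc.stronglyMeasurable]
      simp [ENNReal.toReal_ofReal (hw0 i hi)]
    · intro i hi
      apply Integrable.smul_measure _ ENNReal.ofReal_ne_top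
      exact cm_integrable' ⟨h, hc⟩ _
  have hsum : ∑ i ∈ t, w i • z i = p := by
    rw [← Finset.centerMass_eq_of_sum_1 _ _ hw1]; exact hcm
  refine ⟨φ, hprob, ?_, ?_⟩
  · rw [hint (fun x => (f x).1) (continuous_fst.comp f.continuous)]
    rw [← hsum, Prod.fst_sum]
    refine Finset.sum_congr rfl fun i hi => ?_
    simp [hy i hi]
  · rw [hint (fun x => (f x).2) (continuous_snd.comp f.continuous)]
    rw [← hsum, Prod.snd_sum]
    refine Finset.sum_congr rfl fun i hi => ?_
    simp [hy i hi]

end aux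

/-- Available gambles of forecasts of identifiable properties: if the level set `M_γ` of
the identification function `ν_γ` is nonempty, then the sup-norm closure of the set of
gambles dominated by some calibration gamble `α ν_γ` equals the set of available gambles
for `M_γ`. -/
theorem stmt7 {Y : Type*} [TopologicalSpace Y] [CompactSpace Y]
    [TopologicalSpace.MetrizableSpace Y] [MeasurableSpace Y] [BorelSpace Y]
    (ν : ContinuousMap Y ℝ)
    (hne : {φ : ProbabilityMeasure Y | ∫ x, ν x ∂(φ : Measure Y) = 0}.Nonempty) :
    closure {g : ContinuousMap Y ℝ | ∃ α : ℝ, ∀ x, g x ≤ α * ν x}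
      = {g : ContinuousMap Y ℝ |
          ∀ φ ∈ {φ : ProbabilityMeasure Y | ∫ x, ν x ∂(φ : Measure Y) = 0},
            ∫ x, g x ∂(φ : Measure Y) ≤ 0} := by
  obtain ⟨φ₀, hφ₀⟩ := hne
  have hY : Nonempty Y := by
    by_contra h
    rw [not_nonempty_iff] at h
    have h1 : (φ₀ : Measure Y) univ = 1 := measure_univ
    rw [Set.univ_eq_empty_iff.mpr h, measure_empty] at h1
    exact zero_ne_one h1
  apply Subset.antisymm
  · -- closure S ⊆ T
    have hTclosed : IsClosed {g : ContinuousMap Y ℝ |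
        ∀ φ ∈ {φ : ProbabilityMeasure Y | ∫ x, ν x ∂(φ : Measure Y) = 0},
          ∫ x, g x ∂(φ : Measure Y) ≤ 0} := by
      have heq : {g : ContinuousMap Y ℝ |
          ∀ φ ∈ {φ : ProbabilityMeasure Y | ∫ x, ν x ∂(φ : Measure Y) = 0},
            ∫ x, g x ∂(φ : Measure Y) ≤ 0}
          = ⋂ φ ∈ {φ : ProbabilityMeasure Y | ∫ x, ν x ∂(φ : Measure Y) = 0},
              {g : ContinuousMap Y ℝ | ∫ x, g x ∂(φ : Measure Y) ≤ 0} := by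
        ext g; simp
      rw [heq]
      exact isClosed_biInter fun φ _ =>
        IsClosed.preimage (integral_cm_continuous' (φ : Measure Y)) isClosed_Iic
    apply closure_minimal _ hTclosed
    rintro g ⟨α, hα⟩ φ hφ
    have h1 : ∫ x, g x ∂(φ : Measure Y) ≤ ∫ x, α * ν x ∂(φ : Measure Y) :=
      integral_mono (cm_integrable' g _) ((cm_integrable' ν _).const_mul α) hα
    rw [integral_const_mul, hφ, mul_zero] at h1
    exact h1
  · -- T ⊆ closure S
    intro g hg
    have hg₀ : ∫ x, g x ∂(φ₀ : Measure Y) ≤ 0 := hg φ₀ hφ₀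
    rw [Metric.mem_closure_iff]
    intro ε hε
    set ε' := ε / 2 with hε'def
    have hε' : 0 < ε' := by positivity
    -- Claim: ∃ α, ∀ x, g x ≤ α * ν x + ε'
    have claim : ∃ α : ℝ, ∀ x, g x ≤ α * ν x + ε' := by
      by_contra hcon
      push_neg at hcon
      set f : C(Y, ℝ × ℝ) := ⟨fun x => (ν x, g x), by fun_prop⟩ with hf
      set K := Set.range f with hKdef
      have hK : IsCompact K := isCompact_range f.continuous
      set C := convexHull ℝ K with hC
      have hCc : IsCompact C := isCompact_convexHull_plane' hK
      -- barycenter point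
      have hp₀ : ((0 : ℝ), ∫ x, g x ∂(φ₀ : Measure Y)) ∈ C := by
        have hmem := (convex_convexHull ℝ K).integral_mem (μ := (φ₀ : Measure Y))
          hCc.isClosed
          (Filter.Eventually.of_forall fun x => subset_convexHull ℝ K ⟨x, rfl⟩)
          ((cm_integrable' ν _).prodMk (cm_integrable' g _))
        have hmem' : (∫ x, ((ν x : ℝ), (g x : ℝ)) ∂(φ₀ : Measure Y)) ∈ C := hmem
        rwa [integral_pair (cm_integrable' ν _) (cm_integrable' g _), hφ₀] at hmem'
      -- the bad point is not in C
      have hnot : ((0 : ℝ), ε') ∉ C := by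
        intro hmem
        obtain ⟨φ, hφp, h1, h2⟩ := exists_discrete_measure' f hmem
        have hφM : (⟨φ, hφp⟩ : ProbabilityMeasure Y) ∈
            {φ : ProbabilityMeasure Y | ∫ x, ν x ∂(φ : Measure Y) = 0} := h1
        have := hg _ hφM
        simp only [ProbabilityMeasure.coe_mk] at this
        rw [show (fun x => g x) = fun x => (f x).2 from rfl] at this
        rw [h2] at this
        exact absurd this (not_le.mpr hε')
      -- separation
      obtain ⟨L, u, v, hLs, huv, hLC⟩ :=
        geometric_hahn_banach_compact_closed (convex_singleton ((0 : ℝ), ε'))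
          isCompact_singleton (convex_convexHull ℝ K) hCc.isClosed
          (Set.disjoint_singleton_left.mpr hnot)
      set c1 := L ((1 : ℝ), (0 : ℝ)) with hc1
      set c2 := L ((0 : ℝ), (1 : ℝ)) with hc2
      have hLval : ∀ b : ℝ × ℝ, L b = c1 * b.1 + c2 * b.2 := by
        intro b
        have hb : b = b.1 • ((1 : ℝ), (0 : ℝ)) + b.2 • ((0 : ℝ), (1 : ℝ)) := by
          ext <;> simp
        calc L b = L (b.1 • ((1 : ℝ), (0 : ℝ)) + b.2 • ((0 : ℝ), (1 : ℝ))) := by rw [← hb]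
          _ = c1 * b.1 + c2 * b.2 := by
              rw [map_add, L.map_smul, L.map_smul, smul_eq_mul, smul_eq_mul, ← hc1, ← hc2]
              ring
      have hF3 : c2 * ε' < u := by
        have := hLs _ (Set.mem_singleton _)
        rwa [hLval, mul_zero, zero_add] at this
      have hF5 : v < c2 * (∫ x, g x ∂(φ₀ : Measure Y)) := by
        have := hLC _ hp₀
        rwa [hLval, mul_zero, zero_add] at this
      have hc2neg : c2 < 0 := by
        by_contra hq
        push_neg at hq
        have h6 : c2 * (∫ x, g x ∂(φ₀ : Measure Y)) ≤ 0 := mul_nonpos_of_nonneg_of_nonpos hq hg₀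
        have h7 : 0 ≤ c2 * ε' := mul_nonneg hq hε'.le
        linarith
      obtain ⟨x, hx⟩ := hcon (-c1 / c2)
      have hF1 : v < c1 * ν x + c2 * g x := by
        have := hLC _ (subset_convexHull ℝ K ⟨x, rfl⟩)
        rwa [hLval] at this
      have hc2ne : c2 ≠ 0 := ne_of_lt hc2neg
      have hca : c2 * (-c1 / c2) = -c1 := by
        field_simp
      have hx2 : c2 * g x < c2 * ((-c1 / c2) * ν x + ε') := by
        exact mul_lt_mul_of_neg_left hx hc2neg
      have hexp : c2 * ((-c1 / c2) * ν x + ε') = -(c1 * ν x) + c2 * ε' := by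
        rw [mul_add, ← mul_assoc, hca]; ring
      rw [hexp] at hx2
      linarith
    -- use the claim
    obtain ⟨α, hα⟩ := claim
    refine ⟨g - ContinuousMap.const Y ε', ⟨α, fun x => ?_⟩, ?_⟩
    · simp only [ContinuousMap.sub_apply, ContinuousMap.const_apply]
      linarith [hα x]
    · have hd : dist g (g - ContinuousMap.const Y ε') ≤ ε' := by
        rw [ContinuousMap.dist_le hε'.le]
        intro x
        simp [Real.dist_eq, abs_of_nonneg hε'.le]
      linarith
end

section
/- Let 𝒴 be a finite nonempty set and ν : 𝒴 → ℝ a function, and suppose the set M := {φ : 𝒴 → [0,1] : Σ_y φ(y) = 1 and Σ_y φ(y)ν(y) = 0} of probability vectors annihilating ν is nonempty. Then {g : 𝒴 → ℝ : g ≤ αν pointwise for some α ∈ ℝ} = {g : 𝒴 → ℝ : Σ_y φ(y)g(y) ≤ 0 for all φ ∈ M}; in particular the left-hand set is already closed and no closure operation is needed in finite dimensions. -/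
/-!
If `g ≤ α ν`, every probability vector `φ` with `φ ⬝ᵥ ν = 0` gives `φ ⬝ᵥ g ≤ α (φ ⬝ᵥ ν) = 0`.
Conversely, testing `g` against the point masses at the zeros of `ν` gives `g ≤ 0` there, and
testing it against the two-point mixtures of a point `p` with `ν p > 0` and a point `n` with
`ν n < 0` that annihilate `ν` gives `g p / ν p ≤ g n / ν n`. Any `α` between the (finitely many)
ratios `g / ν` on the positive and on the negative part of `ν` then satisfies `g ≤ α ν`.
The right-hand side is an intersection of closed half-spaces, so both sets are closed.
-/

open Finset Matrix

theorem exists_between_of_forall_le_of_bdd {α : Type*} [ConditionallyCompleteLattice α]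
    {s t : Set α} (hs : BddAbove s) (ht : BddBelow t) (hst : ∀ x ∈ s, ∀ y ∈ t, x ≤ y) :
    (upperBounds s ∩ lowerBounds t).Nonempty := by
  rcases s.eq_empty_or_nonempty with rfl | sne
  · obtain ⟨b, hb⟩ := ht
    exact ⟨b, by simp, hb⟩
  rcases t.eq_empty_or_nonempty with rfl | tne
  · obtain ⟨a, ha⟩ := hs
    exact ⟨a, ha, by simp⟩
  exact exists_between_of_forall_le sne tne hst

section ProbVectors

variable {Y : Type*} [Fintype Y]

def probVectorsAnnihilating (ν : Y → ℝ) : Set (Y → ℝ) :=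
  {φ : Y → ℝ | (∀ y, 0 ≤ φ y ∧ φ y ≤ 1) ∧ (∑ y, φ y) = 1 ∧ (∑ y, φ y * ν y) = 0}

theorem mem_probVectorsAnnihilating_of_nonneg {ν φ : Y → ℝ} (h0 : 0 ≤ φ)
    (h1 : ∑ y, φ y = 1) (hν : ∑ y, φ y * ν y = 0) : φ ∈ probVectorsAnnihilating ν :=
  ⟨fun y => ⟨h0 y, h1 ▸ single_le_sum (fun i _ => h0 i) (mem_univ y)⟩, h1, hν⟩

theorem sum_mul_nonpos_of_le_mul {ν g φ : Y → ℝ} {α : ℝ} (hg : ∀ y, g y ≤ α * ν y)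
    (hφ : φ ∈ probVectorsAnnihilating ν) : ∑ y, φ y * g y ≤ 0 := by
  obtain ⟨hφ01, -, hφν⟩ := hφ
  calc ∑ y, φ y * g y ≤ ∑ y, φ y * (α * ν y) :=
        sum_le_sum fun y _ => mul_le_mul_of_nonneg_left (hg y) (hφ01 y).1
    _ = α * ∑ y, φ y * ν y := by rw [mul_sum]; exact sum_congr rfl fun y _ => by ring
    _ = 0 := by rw [hφν, mul_zero]

theorem sum_single_mul [DecidableEq Y] (z : Y) (f : Y → ℝ) :
    ∑ y, (Pi.single z 1 : Y → ℝ) y * f y = f z := by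
  change (Pi.single z 1 : Y → ℝ) ⬝ᵥ f = _
  simp

theorem sum_pointMixture_mul [DecidableEq Y] (a b : ℝ) (p n : Y) (f : Y → ℝ) :
    ∑ y, (a • Pi.single p 1 + b • Pi.single n 1 : Y → ℝ) y * f y = a * f p + b * f n := by
  change (a • Pi.single p 1 + b • Pi.single n 1 : Y → ℝ) ⬝ᵥ f = _
  simp [add_dotProduct, smul_dotProduct, single_dotProduct]

section Converse

variable {ν g : Y → ℝ} (hg : ∀ φ ∈ probVectorsAnnihilating ν, ∑ y, φ y * g y ≤ 0)
include hg

theorem nonpos_of_forall_sum_mul_nonpos {z : Y} (hz : ν z = 0) : g z ≤ 0 := by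
  classical
  have hmem : Pi.single z 1 ∈ probVectorsAnnihilating ν :=
    mem_probVectorsAnnihilating_of_nonneg (Pi.single_nonneg.mpr zero_le_one)
      (by simp) (by rw [sum_single_mul, hz])
  simpa [sum_single_mul] using hg _ hmem

theorem div_le_div_of_forall_sum_mul_nonpos {p n : Y} (hp : 0 < ν p) (hn : ν n < 0) :
    g p / ν p ≤ g n / ν n := by
  classical
  have hd : 0 < ν p - ν n := by linarith
  set a := -ν n / (ν p - ν n)
  set b := ν p / (ν p - ν n)
  have ha : 0 ≤ a := div_nonneg (by linarith) hd.le
  have hb : 0 ≤ b := div_nonneg hp.le hd.le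
  have hab : a + b = 1 := by rw [← add_div, div_eq_one_iff_eq hd.ne']; ring
  have hmem : a • Pi.single p 1 + b • Pi.single n 1 ∈ probVectorsAnnihilating ν := by
    refine mem_probVectorsAnnihilating_of_nonneg ?_ ?_ ?_
    · exact add_nonneg (smul_nonneg ha (Pi.single_nonneg.mpr zero_le_one))
        (smul_nonneg hb (Pi.single_nonneg.mpr zero_le_one))
    · simpa [hab] using sum_pointMixture_mul a b p n 1
    · rw [sum_pointMixture_mul]
      field_simp
      ring
  have hle := hg _ hmem
  rw [sum_pointMixture_mul] at hle
  have hcross : ν p * g n ≤ ν n * g p := by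
    have hscaled : (ν p - ν n) * (a * g p + b * g n) = ν p * g n - ν n * g p := by
      simp only [a, b]
      field_simp
      ring
    linarith [mul_nonpos_of_nonneg_of_nonpos hd.le hle]
  rw [div_le_iff₀ hp, div_mul_eq_mul_div, le_div_iff_of_neg hn]
  linarith

theorem exists_le_mul_of_forall_sum_mul_nonpos : ∃ α : ℝ, ∀ y, g y ≤ α * ν y := by
  obtain ⟨α, hpos, hneg⟩ := exists_between_of_forall_le_of_bdd
    (Set.toFinite ((fun y => g y / ν y) '' {y | 0 < ν y})).bddAbove
    (Set.toFinite ((fun y => g y / ν y) '' {y | ν y < 0})).bddBelow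
    (by
      rintro _ ⟨p, hp, rfl⟩ _ ⟨n, hn, rfl⟩
      exact div_le_div_of_forall_sum_mul_nonpos hg hp hn)
  refine ⟨α, fun y => ?_⟩
  rcases lt_trichotomy (ν y) 0 with hy | hy | hy
  · exact (le_div_iff_of_neg hy).mp (hneg ⟨y, hy, rfl⟩)
  · simpa [hy] using nonpos_of_forall_sum_mul_nonpos hg hy
  · exact (div_le_iff₀ hy).mp (hpos ⟨y, hy, rfl⟩)

end Converse

theorem setOf_exists_le_mul_eq (ν : Y → ℝ) :
    {g : Y → ℝ | ∃ α : ℝ, ∀ y, g y ≤ α * ν y}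
      = {g | ∀ φ ∈ probVectorsAnnihilating ν, ∑ y, φ y * g y ≤ 0} :=
  Set.ext fun _ => ⟨fun ⟨_, hα⟩ _ hφ => sum_mul_nonpos_of_le_mul hα hφ,
    exists_le_mul_of_forall_sum_mul_nonpos⟩

theorem isClosed_setOf_forall_sum_mul_nonpos (S : Set (Y → ℝ)) :
    IsClosed {g : Y → ℝ | ∀ φ ∈ S, ∑ y, φ y * g y ≤ 0} := by
  simp only [Set.ofPred_forall]
  exact isClosed_biInter fun φ _ => isClosed_le (by fun_prop) continuous_const

end ProbVectors

theorem stmt8_general {Y : Type*} [Fintype Y] (ν : Y → ℝ) :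
    ({g : Y → ℝ | ∃ α : ℝ, ∀ y, g y ≤ α * ν y}
      = {g : Y → ℝ | ∀ φ ∈ {φ : Y → ℝ | (∀ y, 0 ≤ φ y ∧ φ y ≤ 1) ∧ (∑ y, φ y) = 1 ∧
          (∑ y, φ y * ν y) = 0}, (∑ y, φ y * g y) ≤ 0}) ∧
    IsClosed {g : Y → ℝ | ∃ α : ℝ, ∀ y, g y ≤ α * ν y} := by
  have h := setOf_exists_le_mul_eq ν
  exact ⟨h, h ▸ isClosed_setOf_forall_sum_mul_nonpos _⟩

/-- Finite-dimensional case: for a finite outcome set, the set of gambles dominated by some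
calibration gamble `α ν` equals the set of gambles with nonpositive expectation under every
probability vector annihilating `ν`; in particular that set is already closed and no closure
operation is needed. -/
theorem stmt8 {Y : Type*} [Fintype Y] [Nonempty Y] (ν : Y → ℝ)
    (hne : {φ : Y → ℝ | (∀ y, 0 ≤ φ y ∧ φ y ≤ 1) ∧ (∑ y, φ y) = 1 ∧
      (∑ y, φ y * ν y) = 0}.Nonempty) :
    ({g : Y → ℝ | ∃ α : ℝ, ∀ y, g y ≤ α * ν y}
      = {g : Y → ℝ | ∀ φ ∈ {φ : Y → ℝ | (∀ y, 0 ≤ φ y ∧ φ y ≤ 1) ∧ (∑ y, φ y) = 1 ∧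
          (∑ y, φ y * ν y) = 0}, (∑ y, φ y * g y) ≤ 0}) ∧
    IsClosed {g : Y → ℝ | ∃ α : ℝ, ∀ y, g y ≤ α * ν y} :=
  stmt8_general ν
end

section
/- Let V be a nonempty set, s : V → C(𝒴) a scoring function whose superprediction set spr(s) := {g ∈ C(𝒴) : s_c ≤ g pointwise for some c ∈ V} is convex, and ν : V → C(𝒴) an identification function. Fix γ ∈ V and suppose the two level sets coincide and are nonempty: {φ ∈ Δ(𝒴) : ∫ s_γ dφ ≤ ∫ s_c dφ for all c ∈ V} = {φ ∈ Δ(𝒴) : ∫ ν_γ dφ = 0} ≠ ∅. Then the supremum-norm closures coincide: cl{g ∈ C(𝒴) : g ≤ β(s_γ − s_c) pointwise for some β ≥ 0, c ∈ V} = cl{g ∈ C(𝒴) : g ≤ α ν_γ pointwise for some α ∈ ℝ}. That is, scaled regret gambles and calibration gambles dominate the same set of available gambles. -/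
open MeasureTheory

section Stmt9Auxiliary

open TopologicalSpace Set
open scoped ENNReal NNReal

namespace Stmt9Aux

lemma sum_clamp (h t : ℝ) (hh : 0 ≤ h) (n : ℕ) :
    ∑ i ∈ Finset.range n, min (max (t - i * h) 0) h = min (max t 0) (n * h) := by
  rcases le_or_gt t 0 with ht | ht
  · have hz : ∀ i : ℕ, min (max (t - i * h) 0) h = 0 := by
      intro i
      have hih : 0 ≤ (i : ℝ) * h := mul_nonneg (Nat.cast_nonneg i) hh
      rw [max_eq_right (by linarith), min_eq_left hh]
    have hnn : (0:ℝ) ≤ (n : ℝ) * h := mul_nonneg (Nat.cast_nonneg n) hh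
    rw [Finset.sum_congr rfl (fun i _ => hz i), Finset.sum_const, smul_zero,
      max_eq_right ht, min_eq_left hnn]
  · induction n with
    | zero => norm_num [max_eq_left ht.le, min_eq_right ht.le]
    | succ n ih =>
      rw [Finset.sum_range_succ, ih, max_eq_left ht.le]
      push_cast
      rcases le_total t ((n : ℝ) * h) with hc | hc
      · have h1 : t - n * h ≤ 0 := by linarith
        rw [min_eq_left hc, max_eq_right h1, min_eq_left hh,
          min_eq_left (by nlinarith : t ≤ ((n : ℝ) + 1) * h)]
        ring
      · rw [min_eq_right hc, max_eq_left (by linarith)]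
        rcases le_total (t - n * h) h with h3 | h3
        · rw [min_eq_left h3, min_eq_left (by nlinarith : t ≤ ((n : ℝ) + 1) * h)]
          ring
        · rw [min_eq_right h3, min_eq_right (by nlinarith : ((n : ℝ) + 1) * h ≤ t)]
          ring


variable {Y : Type*} [TopologicalSpace Y] [CompactSpace Y]

/-- Test functions: continuous `f : Y → [0,1]` with `f = 1` on `K`. -/
def T (K : Set Y) : Set C(Y, ℝ) :=
  {f | (∀ x, 0 ≤ f x ∧ f x ≤ 1) ∧ ∀ x ∈ K, f x = 1}

lemma one_mem_T (K : Set Y) : (1 : C(Y, ℝ)) ∈ T K :=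
  ⟨fun _ => by norm_num, fun _ _ => rfl⟩

variable (L : C(Y, ℝ) →L[ℝ] ℝ)

/-- The Riesz content value of a set. -/
noncomputable def lam (K : Set Y) : ℝ := sInf (L '' T K)

lemma lam_le {K : Set Y} {f : C(Y, ℝ)} (hpos : ∀ g : C(Y, ℝ), (∀ x, 0 ≤ g x) → 0 ≤ L g)
    (hf : f ∈ T K) : lam L K ≤ L f :=
  csInf_le ⟨0, fun _ ⟨g, hg, hgL⟩ => hgL ▸ hpos g (fun x => (hg.1 x).1)⟩ ⟨f, hf, rfl⟩

lemma le_lam {K : Set Y} {c : ℝ} (h : ∀ f ∈ T K, c ≤ L f) : c ≤ lam L K :=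
  le_csInf ⟨L 1, 1, one_mem_T K, rfl⟩ (fun _ ⟨g, hg, hgL⟩ => hgL ▸ h g hg)

lemma lam_nonneg {K : Set Y} (hpos : ∀ g : C(Y, ℝ), (∀ x, 0 ≤ g x) → 0 ≤ L g) :
    0 ≤ lam L K :=
  le_lam L (fun f hf => hpos f (fun x => (hf.1 x).1))

lemma mono_L (hpos : ∀ g : C(Y, ℝ), (∀ x, 0 ≤ g x) → 0 ≤ L g) {f g : C(Y, ℝ)}
    (h : ∀ x, f x ≤ g x) : L f ≤ L g := by
  have h1 := hpos (g - f) (fun x => by simp [sub_nonneg, h x])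
  rw [map_sub] at h1
  linarith

lemma lam_mono (hpos : ∀ g : C(Y, ℝ), (∀ x, 0 ≤ g x) → 0 ≤ L g) {K₁ K₂ : Set Y}
    (h : K₁ ⊆ K₂) : lam L K₁ ≤ lam L K₂ :=
  le_lam L fun f hf => lam_le L hpos ⟨hf.1, fun x hx => hf.2 x (h hx)⟩

lemma lam_union_le (hpos : ∀ g : C(Y, ℝ), (∀ x, 0 ≤ g x) → 0 ≤ L g) (K₁ K₂ : Set Y) :
    lam L (K₁ ∪ K₂) ≤ lam L K₁ + lam L K₂ := by
  have key : ∀ f₁ ∈ T K₁, ∀ f₂ ∈ T K₂, lam L (K₁ ∪ K₂) ≤ L f₁ + L f₂ := by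
    intro f₁ hf₁ f₂ hf₂
    set f : C(Y, ℝ) := f₁ + f₂ - f₁ * f₂ with hfdef
    have hb : ∀ x, 0 ≤ f x ∧ f x ≤ 1 := by
      intro x
      obtain ⟨a1, b1⟩ := hf₁.1 x
      obtain ⟨a2, b2⟩ := hf₂.1 x
      constructor <;> simp only [hfdef, ContinuousMap.sub_apply, ContinuousMap.add_apply,
        ContinuousMap.mul_apply] <;> nlinarith
    have hone : ∀ x ∈ K₁ ∪ K₂, f x = 1 := by
      intro x hx
      simp only [hfdef, ContinuousMap.sub_apply, ContinuousMap.add_apply,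
        ContinuousMap.mul_apply]
      rcases hx with hx | hx
      · rw [hf₁.2 x hx]; ring
      · rw [hf₂.2 x hx]; ring
    have h1 : lam L (K₁ ∪ K₂) ≤ L f := lam_le L hpos ⟨hb, hone⟩
    have h2 : L f ≤ L (f₁ + f₂) := by
      apply mono_L L hpos
      intro x
      obtain ⟨a1, _⟩ := hf₁.1 x
      obtain ⟨a2, _⟩ := hf₂.1 x
      simp only [hfdef, ContinuousMap.sub_apply, ContinuousMap.add_apply,
        ContinuousMap.mul_apply]
      nlinarith
    rw [map_add] at h2
    linarith
  have h1 : lam L (K₁ ∪ K₂) - lam L K₁ ≤ lam L K₂ := by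
    apply le_lam
    intro f₂ hf₂
    rw [sub_le_iff_le_add]
    have : lam L (K₁ ∪ K₂) - L f₂ ≤ lam L K₁ := by
      apply le_lam
      intro f₁ hf₁
      have := key f₁ hf₁ f₂ hf₂
      linarith
    linarith
  linarith

lemma lam_union_disjoint [NormalSpace Y]
    (hpos : ∀ g : C(Y, ℝ), (∀ x, 0 ≤ g x) → 0 ≤ L g) {K₁ K₂ : Set Y}
    (hd : Disjoint K₁ K₂) (hc₁ : IsClosed K₁) (hc₂ : IsClosed K₂) :
    lam L (K₁ ∪ K₂) = lam L K₁ + lam L K₂ := by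
  refine le_antisymm (lam_union_le L hpos K₁ K₂) ?_
  apply le_lam
  intro f hf
  obtain ⟨g, hg0, hg1, hg01⟩ := exists_continuous_zero_one_of_isClosed hc₂ hc₁ hd.symm
  have hmem₁ : f * g ∈ T K₁ := by
    refine ⟨fun x => ?_, fun x hx => ?_⟩
    · obtain ⟨a, b⟩ := hf.1 x
      obtain ⟨c, d⟩ := hg01 x
      exact ⟨by simpa using mul_nonneg a c, by simpa using mul_le_one₀ b c d⟩
    · have h1 : f x = 1 := hf.2 x (Or.inl hx)
      have h2 : g x = 1 := hg1 hx
      simp [h1, h2]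
  have hmem₂ : f * (1 - g) ∈ T K₂ := by
    refine ⟨fun x => ?_, fun x hx => ?_⟩
    · obtain ⟨a, b⟩ := hf.1 x
      obtain ⟨c, d⟩ := hg01 x
      constructor
      · simp only [ContinuousMap.mul_apply, ContinuousMap.sub_apply, ContinuousMap.one_apply]
        nlinarith
      · simp only [ContinuousMap.mul_apply, ContinuousMap.sub_apply, ContinuousMap.one_apply]
        nlinarith
    · have h1 : f x = 1 := hf.2 x (Or.inr hx)
      have h2 : g x = 0 := hg0 hx
      simp [h1, h2]
  have hsplit : L (f * g) + L (f * (1 - g)) = L f := by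
    rw [← map_add]
    congr 1
    ext x
    simp only [ContinuousMap.add_apply, ContinuousMap.mul_apply, ContinuousMap.sub_apply,
      ContinuousMap.one_apply]
    ring
  have := lam_le L hpos hmem₁
  have := lam_le L hpos hmem₂
  linarith

/-- The Riesz content associated to a positive functional. -/
noncomputable def rieszCont [NormalSpace Y]
    (hpos : ∀ g : C(Y, ℝ), (∀ x, 0 ≤ g x) → 0 ≤ L g) : Content Y where
  toFun K := Real.toNNReal (lam L K)
  mono' K₁ K₂ h := Real.toNNReal_mono (lam_mono L hpos h)
  sup_disjoint' K₁ K₂ hd hc₁ hc₂ := by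
    simp only [Compacts.coe_sup]
    rw [lam_union_disjoint L hpos hd hc₁ hc₂,
      Real.toNNReal_add (lam_nonneg L hpos) (lam_nonneg L hpos)]
  sup_le' K₁ K₂ := by
    simp only [Compacts.coe_sup]
    calc Real.toNNReal (lam L (↑K₁ ∪ ↑K₂)) ≤ Real.toNNReal (lam L ↑K₁ + lam L ↑K₂) :=
          Real.toNNReal_mono (lam_union_le L hpos _ _)
      _ = Real.toNNReal (lam L ↑K₁) + Real.toNNReal (lam L ↑K₂) :=
          Real.toNNReal_add (lam_nonneg L hpos) (lam_nonneg L hpos)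


lemma rieszCont_apply [NormalSpace Y] (L : C(Y, ℝ) →L[ℝ] ℝ)
    (hpos : ∀ g : C(Y, ℝ), (∀ x, 0 ≤ g x) → 0 ≤ L g)
    (K : Compacts Y) : rieszCont L hpos K = (Real.toNNReal (lam L ↑K) : ℝ≥0∞) := rfl

section Meas
variable [NormalSpace Y] [T2Space Y] [MeasurableSpace Y] [BorelSpace Y]

lemma cm_integrable (μ : Measure Y) [IsFiniteMeasure μ] (f : C(Y, ℝ)) :
    Integrable (fun x => f x) μ :=
  f.continuous.integrable_of_hasCompactSupport (HasCompactSupport.of_compactSpace _)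

variable (L : C(Y, ℝ) →L[ℝ] ℝ)
variable (hpos : ∀ g : C(Y, ℝ), (∀ x, 0 ≤ g x) → 0 ≤ L g)

/-- The Riesz measure. -/
noncomputable def rieszMu : Measure Y := (rieszCont L hpos).measure

lemma lam_univ : lam L univ = L 1 := by
  have : L '' T (univ : Set Y) = {L 1} := by
    apply Subset.antisymm
    · rintro _ ⟨f, hf, rfl⟩
      have : f = 1 := by
        ext x
        simpa using hf.2 x (mem_univ x)
      simp [this]
    · rintro _ rfl
      exact ⟨1, ⟨fun _ => by norm_num, fun _ _ => rfl⟩, rfl⟩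
  rw [lam, this, csInf_singleton]

lemma rieszMu_univ : rieszMu L hpos univ = ENNReal.ofReal (L 1) := by
  rw [rieszMu, (rieszCont L hpos).measure_apply MeasurableSet.univ,
    (rieszCont L hpos).outerMeasure_of_isOpen univ isOpen_univ]
  have : (rieszCont L hpos).innerContent ⟨univ, isOpen_univ⟩
      = rieszCont L hpos ⊤ := by
    apply le_antisymm
    · apply iSup₂_le
      intro K _
      exact ENNReal.coe_le_coe.2 ((rieszCont L hpos).mono' K ⊤ (by simp))
    · exact (rieszCont L hpos).le_innerContent ⊤ _ (by simp)
  rw [this]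
  have happ : (rieszCont L hpos) ⊤ = (Real.toNNReal (L 1) : ℝ≥0∞) := by
    rw [rieszCont_apply L hpos ⊤]
    norm_num [show ((⊤ : Compacts Y) : Set Y) = univ from rfl, lam_univ]
  exact happ

instance : IsFiniteMeasure (rieszMu L hpos) := by
  constructor
  rw [rieszMu_univ L hpos]
  exact ENNReal.ofReal_lt_top

lemma rieszMu_open_bound {U : Set Y} (hU : IsOpen U) {g : C(Y, ℝ)}
    (hg : ∀ x, 0 ≤ g x ∧ g x ≤ 1) (hsupp : ∀ x, g x ≠ 0 → x ∈ U) :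
    L g ≤ (rieszMu L hpos U).toReal := by
  have hL1 : 0 ≤ L 1 := hpos 1 (fun _ => by norm_num)
  have key : ∀ δ : ℝ, 0 < δ → L g ≤ (rieszMu L hpos U).toReal + δ * L 1 := by
    intro δ hδ
    set K : Set Y := {x | δ ≤ g x} with hK
    have hKc : IsClosed K := isClosed_le continuous_const g.continuous
    have hKcomp : IsCompact K := hKc.isCompact
    have hKU : K ⊆ U := fun x hx => hsupp x (by dsimp [K] at hx; intro h0; rw [h0] at hx; linarith)
    -- L g ≤ lam K + δ L 1
    have h1 : L g - δ * L 1 ≤ lam L K := by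
      apply le_lam
      intro f hf
      have : L g ≤ L (f + δ • (1 : C(Y, ℝ))) := by
        apply mono_L L hpos
        intro x
        simp only [ContinuousMap.add_apply, ContinuousMap.smul_apply, ContinuousMap.one_apply,
          smul_eq_mul, mul_one]
        rcases le_or_gt δ (g x) with h | h
        · have : f x = 1 := hf.2 x h
          have := (hg x).2
          linarith
        · have := (hf.1 x).1
          linarith
      rw [map_add, _root_.map_smul, smul_eq_mul] at this
      linarith
    -- lam K ≤ μ U
    have h2 : lam L K ≤ (rieszMu L hpos U).toReal := by
      have hle : ((rieszCont L hpos) (⟨K, hKcomp⟩ : Compacts Y) : ℝ≥0∞)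
          ≤ rieszMu L hpos U := by
        rw [rieszMu, (rieszCont L hpos).measure_apply hU.measurableSet,
          (rieszCont L hpos).outerMeasure_of_isOpen U hU]
        exact (rieszCont L hpos).le_innerContent (⟨K, hKcomp⟩ : Compacts Y) ⟨U, hU⟩ hKU
      have hfin : rieszMu L hpos U ≠ ⊤ := measure_ne_top _ _
      have h3 := ENNReal.toReal_mono hfin hle
      rw [rieszCont_apply L hpos] at h3
      rwa [ENNReal.coe_toReal, Real.coe_toNNReal _ (lam_nonneg L hpos)] at h3
    linarith
  -- conclude
  by_contra hcon
  push_neg at hcon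
  set ε := L g - (rieszMu L hpos U).toReal with hε
  have hεpos : 0 < ε := by simp [hε]; linarith
  have := key (ε / (L 1 + 1)) (by positivity)
  have hfrac : ε / (L 1 + 1) * L 1 < ε := by
    rw [div_mul_eq_mul_div, div_lt_iff₀ (by linarith)]
    nlinarith
  linarith


lemma le_integral_of_unit (f : C(Y, ℝ)) (hf : ∀ x, 0 ≤ f x ∧ f x < 1) :
    L f ≤ ∫ x, f x ∂(rieszMu L hpos) := by
  set μ := rieszMu L hpos with hμ
  have main : ∀ n : ℕ, 0 < n → L f ≤ (∫ x, f x ∂μ) + (μ univ).toReal / n := by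
    intro n hn
    have hnR : (0:ℝ) < n := by exact_mod_cast hn
    set h : ℝ := 1 / n with hdef
    have hh : 0 < h := by positivity
    -- the pieces
    set F : ℕ → C(Y, ℝ) := fun i =>
      ⟨fun x => min (max (f x - i * h) 0) h,
        (((f.continuous.sub continuous_const).max continuous_const).min continuous_const)⟩
      with hF
    have hFx : ∀ i x, F i x = min (max (f x - i * h) 0) h := fun i x => rfl
    have hF0 : ∀ i x, 0 ≤ F i x := fun i x => le_min (le_max_right _ _) hh.le
    have hFh : ∀ i x, F i x ≤ h := fun i x => min_le_right _ _
    have hsum : ∀ x, ∑ i ∈ Finset.range n, F i x = f x := by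
      intro x
      have := sum_clamp h (f x) hh.le n
      rw [max_eq_left (hf x).1] at this
      have hnh : (n : ℝ) * h = 1 := by rw [hdef, mul_one_div_cancel hnR.ne']
      rw [hnh, min_eq_left (hf x).2.le] at this
      simpa [hFx] using this
    have hfeq : f = ∑ i ∈ Finset.range n, F i := by
      ext x
      rw [ContinuousMap.coe_sum]
      simpa using (hsum x).symm
    -- per-piece upper bound via open sets
    set U : ℕ → Set Y := fun i => {x | (i : ℝ) * h < f x} with hU
    have hUopen : ∀ i, IsOpen (U i) := fun i =>
      isOpen_lt continuous_const f.continuous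
    have hLF : ∀ i, L (F i) ≤ h * (μ (U i)).toReal := by
      intro i
      have hng : L ((n : ℝ) • F i) ≤ (μ (U i)).toReal := by
        apply rieszMu_open_bound L hpos (hUopen i)
        · intro x
          constructor
          · simpa using mul_nonneg hnR.le (hF0 i x)
          · have := hFh i x
            simp only [ContinuousMap.smul_apply, smul_eq_mul]
            calc (n : ℝ) * F i x ≤ n * h := by nlinarith [hF0 i x]
              _ = 1 := by rw [hdef, mul_one_div_cancel hnR.ne']
        · intro x hx
          simp only [ContinuousMap.smul_apply, smul_eq_mul] at hx
          have hFix : F i x ≠ 0 := fun h0 => hx (by rw [h0]; ring)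
          have hlt : (i : ℝ) * h < f x := by
            by_contra hcon
            push_neg at hcon
            exact hFix (by rw [hFx, max_eq_right (by linarith), min_eq_left hh.le])
          simpa [hU] using hlt
      rw [_root_.map_smul, smul_eq_mul] at hng
      calc L (F i) = h * ((n : ℝ) * L (F i)) := by rw [hdef, ← mul_assoc, one_div_mul_cancel hnR.ne', one_mul]
        _ ≤ h * (μ (U i)).toReal := by
            apply mul_le_mul_of_nonneg_left _ hh.le
            exact hng
    -- per-piece lower bound on the integral
    set K : ℕ → Set Y := fun i => {x | ((i : ℝ) + 1) * h ≤ f x} with hKdef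
    have hKmeas : ∀ i, MeasurableSet (K i) :=
      fun i => (isClosed_le continuous_const f.continuous).measurableSet
    have hIF : ∀ i, h * (μ (K i)).toReal ≤ ∫ x, F i x ∂μ := by
      intro i
      have h1 : ∫ x in K i, (h : ℝ) ∂μ ≤ ∫ x in K i, F i x ∂μ := by
        apply setIntegral_mono_on
        · exact integrableOn_const (measure_ne_top μ _)
        · exact (cm_integrable μ (F i)).integrableOn
        · exact hKmeas i
        · intro x hx
          have hxK : ((i : ℝ) + 1) * h ≤ f x := hx
          have : h ≤ f x - i * h := by nlinarith
          rw [hFx]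
          rw [max_eq_left (by linarith)]
          exact le_min this (le_refl h)
      have h2 : ∫ x in K i, F i x ∂μ ≤ ∫ x, F i x ∂μ := by
        apply setIntegral_le_integral (cm_integrable μ (F i))
        filter_upwards with x using hF0 i x
      rw [setIntegral_const, smul_eq_mul, mul_comm, measureReal_def] at h1
      linarith
    -- sum of measures of U i's
    have hUsum : ∑ i ∈ Finset.range n, (μ (U i)).toReal
        ≤ (μ univ).toReal + ∑ i ∈ Finset.range n, (μ (K i)).toReal := by
      obtain ⟨m, rfl⟩ : ∃ m, n = m + 1 := ⟨n - 1, (Nat.succ_pred_eq_of_pos hn).symm⟩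
      rw [Finset.sum_range_succ']
      have hstep : ∀ i, (μ (U (i + 1))).toReal ≤ (μ (K i)).toReal := by
        intro i
        apply ENNReal.toReal_mono (measure_ne_top μ _)
        apply measure_mono
        intro x hx
        have : ((i : ℝ) + 1) * h < f x := by
          have hx' : ((i + 1 : ℕ) : ℝ) * h < f x := hx
          push_cast at hx'
          linarith
        exact this.le
      have h0 : (μ (U 0)).toReal ≤ (μ univ).toReal :=
        ENNReal.toReal_mono (measure_ne_top μ _) (measure_mono (subset_univ _))
      have hsum1 : ∑ i ∈ Finset.range m, (μ (U (i + 1))).toReal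
          ≤ ∑ i ∈ Finset.range m, (μ (K i)).toReal :=
        Finset.sum_le_sum fun i _ => hstep i
      have hsum2 : ∑ i ∈ Finset.range m, (μ (K i)).toReal
          ≤ ∑ i ∈ Finset.range (m + 1), (μ (K i)).toReal := by
        rw [Finset.sum_range_succ]
        have : (0:ℝ) ≤ (μ (K m)).toReal := ENNReal.toReal_nonneg
        linarith
      linarith
    -- put it together
    have hLsum : L f = ∑ i ∈ Finset.range n, L (F i) := by
      rw [hfeq, map_sum]
    have hIsum : ∫ x, f x ∂μ = ∑ i ∈ Finset.range n, ∫ x, F i x ∂μ := by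
      rw [hfeq]
      rw [show (fun x => (∑ i ∈ Finset.range n, F i) x) = fun x => ∑ i ∈ Finset.range n, F i x by
        ext x; rw [ContinuousMap.coe_sum]; simp]
      exact integral_finset_sum _ (fun i _ => cm_integrable μ (F i))
    calc L f = ∑ i ∈ Finset.range n, L (F i) := hLsum
      _ ≤ ∑ i ∈ Finset.range n, h * (μ (U i)).toReal := Finset.sum_le_sum fun i _ => hLF i
      _ = h * ∑ i ∈ Finset.range n, (μ (U i)).toReal := by rw [Finset.mul_sum]
      _ ≤ h * ((μ univ).toReal + ∑ i ∈ Finset.range n, (μ (K i)).toReal) :=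
          mul_le_mul_of_nonneg_left hUsum hh.le
      _ = h * (μ univ).toReal + ∑ i ∈ Finset.range n, h * (μ (K i)).toReal := by
          rw [mul_add, Finset.mul_sum]
      _ ≤ h * (μ univ).toReal + ∑ i ∈ Finset.range n, ∫ x, F i x ∂μ := by
          have := Finset.sum_le_sum fun i (_ : i ∈ Finset.range n) => hIF i
          linarith
      _ = (∫ x, f x ∂μ) + (μ univ).toReal / n := by
          rw [hIsum, hdef]
          ring
  -- conclude by letting n → ∞
  apply le_of_forall_pos_le_add
  intro ε hε
  obtain ⟨n, hn⟩ := exists_nat_gt ((μ univ).toReal / ε)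
  have hn0 : 0 < n := by
    by_contra hcon
    push_neg at hcon
    interval_cases n
    simp at hn
    exact absurd hn (not_lt.2 (div_nonneg ENNReal.toReal_nonneg hε.le))
  have := main n hn0
  have hnR : (0:ℝ) < n := by exact_mod_cast hn0
  have : (μ univ).toReal / n < ε := by
    rw [div_lt_iff₀ hnR]
    rw [div_lt_iff₀ hε] at hn
    linarith
  linarith [main n hn0]


lemma integral_rieszMu (f : C(Y, ℝ)) : ∫ x, f x ∂(rieszMu L hpos) = L f := by
  set μ := rieszMu L hpos with hμ
  have hL1 : 0 ≤ L 1 := hpos 1 (fun _ => by norm_num)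
  have hμuniv : (μ univ).toReal = L 1 := by
    rw [hμ, rieszMu_univ L hpos, ENNReal.toReal_ofReal hL1]
  have half : ∀ g : C(Y, ℝ), L g ≤ ∫ x, g x ∂μ := by
    intro g
    set a : ℝ := ‖g‖ + 1 with ha
    have ha1 : 1 ≤ a := by
      have := norm_nonneg g
      simp only [ha]; linarith [norm_nonneg g]
    have ha0 : 0 < a := by linarith
    have h2a : 0 < (2 * a)⁻¹ := by positivity
    set g' : C(Y, ℝ) := (2 * a)⁻¹ • (g + ContinuousMap.const Y a) with hg'
    have hb : ∀ x, 0 ≤ g' x ∧ g' x < 1 := by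
      intro x
      have hnx : |g x| ≤ ‖g‖ := by
        rw [← Real.norm_eq_abs]
        exact g.norm_coe_le_norm x
      rw [abs_le] at hnx
      constructor
      · simp only [hg', ContinuousMap.smul_apply, ContinuousMap.add_apply,
          ContinuousMap.const_apply, smul_eq_mul]
        have : 0 ≤ g x + a := by linarith [hnx.1]
        positivity
      · simp only [hg', ContinuousMap.smul_apply, ContinuousMap.add_apply,
          ContinuousMap.const_apply, smul_eq_mul]
        rw [inv_mul_lt_iff₀ (by positivity), mul_one]
        linarith [hnx.2]
    have hkey := le_integral_of_unit L hpos g' hb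
    have hconst : L (ContinuousMap.const Y a) = a * L 1 := by
      have : ContinuousMap.const Y a = a • (1 : C(Y, ℝ)) := by
        ext x; simp
      rw [this, _root_.map_smul, smul_eq_mul]
    have hLg' : L g' = (2 * a)⁻¹ * (L g + a * L 1) := by
      rw [hg', _root_.map_smul, map_add, hconst, smul_eq_mul]
    have hIg' : ∫ x, g' x ∂μ = (2 * a)⁻¹ * ((∫ x, g x ∂μ) + a * L 1) := by
      have hfun : (fun x => g' x) = fun x => (2 * a)⁻¹ * (g x + a) := by
        ext x
        simp only [hg', ContinuousMap.smul_apply, ContinuousMap.add_apply,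
          ContinuousMap.const_apply, smul_eq_mul]
        try ring
      rw [hfun, integral_const_mul]
      rw [integral_add (cm_integrable μ g) (integrable_const a)]
      rw [integral_const, smul_eq_mul, measureReal_def, hμuniv]
      ring
    rw [hLg', hIg'] at hkey
    have := (mul_le_mul_iff_right₀ h2a).1 hkey
    linarith
  refine le_antisymm ?_ (half f)
  have := half (-f)
  rw [map_neg] at this
  have hni : ∫ x, (-f) x ∂μ = -∫ x, f x ∂μ := by
    simp only [ContinuousMap.neg_apply]
    exact integral_neg _
  rw [hni] at this
  linarith

include hpos in
/-- Riesz representation for a positive normalized functional. -/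
theorem exists_prob (hone : L 1 = 1) :
    ∃ φ : ProbabilityMeasure Y, ∀ f : C(Y, ℝ), ∫ x, f x ∂(φ : Measure Y) = L f := by
  have hprob : IsProbabilityMeasure (rieszMu L hpos) := by
    constructor
    rw [rieszMu_univ L hpos, hone, ENNReal.ofReal_one]
  exact ⟨⟨rieszMu L hpos, hprob⟩, fun f => integral_rieszMu L hpos f⟩


end Meas

/-- Separation of a point from a downward-closed convex cone by a state. -/
lemma sep {D : Set C(Y, ℝ)} (hconv : Convex ℝ D)
    (hcone : ∀ g ∈ D, ∀ t : ℝ, 0 ≤ t → t • g ∈ D)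
    (hdown : ∀ h : C(Y, ℝ), (∀ x, h x ≤ 0) → h ∈ D)
    {g₀ : C(Y, ℝ)} (hg₀ : g₀ ∉ closure D) :
    ∃ L : C(Y, ℝ) →L[ℝ] ℝ, (∀ g : C(Y, ℝ), (∀ x, 0 ≤ g x) → 0 ≤ L g) ∧
      (∀ g ∈ D, L g ≤ 0) ∧ 0 < L g₀ ∧ L 1 = 1 := by
  obtain ⟨L, u, hs, hu⟩ :=
    geometric_hahn_banach_closed_point hconv.closure isClosed_closure hg₀
  have h0D : (0 : C(Y, ℝ)) ∈ D := hdown 0 (fun x => le_refl 0)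
  have hupos : 0 < u := by
    have := hs 0 (subset_closure h0D)
    rwa [map_zero] at this
  have hle : ∀ g ∈ D, L g ≤ 0 := by
    intro g hg
    by_contra hcon
    push_neg at hcon
    have ht : (0:ℝ) ≤ (u + 1) / L g := by positivity
    have hmem := hcone g hg ((u + 1) / L g) ht
    have := hs _ (subset_closure hmem)
    rw [_root_.map_smul, smul_eq_mul, div_mul_cancel₀ _ (ne_of_gt hcon)] at this
    linarith
  have hposL : ∀ g : C(Y, ℝ), (∀ x, 0 ≤ g x) → 0 ≤ L g := by
    intro g hg
    have : L (-g) ≤ 0 := hle (-g) (hdown (-g) (fun x => by simpa using hg x))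
    rw [map_neg] at this
    linarith
  have hg₀pos : 0 < L g₀ := lt_trans hupos hu
  have hL1 : 0 < L 1 := by
    rcases lt_or_eq_of_le (hposL 1 (fun _ => by norm_num)) with h | h
    · exact h
    · exfalso
      have hzero : ∀ g : C(Y, ℝ), L g = 0 := by
        intro g
        have h1 : L g ≤ 0 := by
          have : L g ≤ L (‖g‖ • (1 : C(Y, ℝ))) := by
            apply mono_L L hposL
            intro x
            simp only [ContinuousMap.smul_apply, ContinuousMap.one_apply, smul_eq_mul, mul_one]
            calc g x ≤ |g x| := le_abs_self _
              _ ≤ ‖g‖ := by rw [← Real.norm_eq_abs]; exact g.norm_coe_le_norm x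
          rwa [_root_.map_smul, smul_eq_mul, ← h, mul_zero] at this
        have h2 : L (-g) ≤ 0 := by
          have : L (-g) ≤ L (‖g‖ • (1 : C(Y, ℝ))) := by
            apply mono_L L hposL
            intro x
            simp only [ContinuousMap.neg_apply, ContinuousMap.smul_apply,
              ContinuousMap.one_apply, smul_eq_mul, mul_one]
            calc -g x ≤ |g x| := neg_le_abs _
              _ ≤ ‖g‖ := by rw [← Real.norm_eq_abs]; exact g.norm_coe_le_norm x
          rwa [_root_.map_smul, smul_eq_mul, ← h, mul_zero] at this
        rw [map_neg] at h2
        linarith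
      rw [hzero g₀] at hg₀pos
      exact lt_irrefl 0 hg₀pos
  refine ⟨(L 1)⁻¹ • L, ?_, ?_, ?_, ?_⟩
  · intro g hg
    simp only [ContinuousLinearMap.smul_apply, smul_eq_mul]
    exact mul_nonneg (inv_nonneg.2 hL1.le) (hposL g hg)
  · intro g hg
    simp only [ContinuousLinearMap.smul_apply, smul_eq_mul]
    exact mul_nonpos_of_nonneg_of_nonpos (inv_nonneg.2 hL1.le) (hle g hg)
  · simp only [ContinuousLinearMap.smul_apply, smul_eq_mul]
    exact mul_pos (inv_pos.2 hL1) hg₀pos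
  · simp only [ContinuousLinearMap.smul_apply, smul_eq_mul]
    exact inv_mul_cancel₀ (ne_of_gt hL1)


end Stmt9Aux

end Stmt9Auxiliary

open Stmt9Aux in
/-- Duality of calibration and regret: for a property that is both elicitable (via `s`, with
convex superprediction set) and identifiable (via `ν`), i.e. whose loss-minimization level
set coincides with the identification level set and is nonempty, the sup-norm closures of
the set of gambles dominated by scaled regret gambles and of the set of gambles dominated
by calibration gambles coincide. -/
theorem stmt9 {Y : Type*} [TopologicalSpace Y] [CompactSpace Y]
    [TopologicalSpace.MetrizableSpace Y] [MeasurableSpace Y] [BorelSpace Y]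
    {V : Type*} [Nonempty V] (s ν : V → ContinuousMap Y ℝ)
    (hsprconv : Convex ℝ {g : ContinuousMap Y ℝ | ∃ c : V, ∀ x, s c x ≤ g x})
    (γ : V)
    (heq : {φ : ProbabilityMeasure Y |
        ∀ c : V, ∫ x, s γ x ∂(φ : Measure Y) ≤ ∫ x, s c x ∂(φ : Measure Y)}
      = {φ : ProbabilityMeasure Y | ∫ x, ν γ x ∂(φ : Measure Y) = 0})
    (hne : {φ : ProbabilityMeasure Y | ∫ x, ν γ x ∂(φ : Measure Y) = 0}.Nonempty) :
    closure {g : ContinuousMap Y ℝ |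
        ∃ β : ℝ, 0 ≤ β ∧ ∃ c : V, ∀ x, g x ≤ β * (s γ x - s c x)}
      = closure {g : ContinuousMap Y ℝ | ∃ α : ℝ, ∀ x, g x ≤ α * ν γ x} := by
  letI : MetricSpace Y := TopologicalSpace.metrizableSpaceMetric Y
  haveI : NormalSpace Y := inferInstance
  set A := {g : ContinuousMap Y ℝ |
      ∃ β : ℝ, 0 ≤ β ∧ ∃ c : V, ∀ x, g x ≤ β * (s γ x - s c x)} with hA
  set B := {g : ContinuousMap Y ℝ | ∃ α : ℝ, ∀ x, g x ≤ α * ν γ x} with hB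
  -- structural facts about A
  have hAdown : ∀ h : C(Y, ℝ), (∀ x, h x ≤ 0) → h ∈ A := by
    intro h hh
    exact ⟨0, le_refl 0, Classical.arbitrary V, fun x => by rw [zero_mul]; exact hh x⟩
  have hAcone : ∀ g ∈ A, ∀ t : ℝ, 0 ≤ t → t • g ∈ A := by
    rintro g ⟨β, hβ, c, hg⟩ t ht
    refine ⟨t * β, mul_nonneg ht hβ, c, fun x => ?_⟩
    simp only [ContinuousMap.smul_apply, smul_eq_mul]
    calc t * g x ≤ t * (β * (s γ x - s c x)) := mul_le_mul_of_nonneg_left (hg x) ht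
      _ = t * β * (s γ x - s c x) := by ring
  have hAconv : Convex ℝ A := by
    rintro g₁ ⟨β₁, hβ₁, c₁, h₁⟩ g₂ ⟨β₂, hβ₂, c₂, h₂⟩ a b ha hb hab
    rcases eq_or_lt_of_le (show (0:ℝ) ≤ a * β₁ + b * β₂ by positivity) with hz | hpos'
    · have h1 : a * β₁ = 0 := by nlinarith
      have h2 : b * β₂ = 0 := by nlinarith
      refine ⟨0, le_refl 0, c₁, fun x => ?_⟩
      have e1 : a * g₁ x ≤ 0 := by
        have := mul_le_mul_of_nonneg_left (h₁ x) ha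
        rw [show a * (β₁ * (s γ x - s c₁ x)) = a * β₁ * (s γ x - s c₁ x) by ring, h1,
          zero_mul] at this
        exact this
      have e2 : b * g₂ x ≤ 0 := by
        have := mul_le_mul_of_nonneg_left (h₂ x) hb
        rw [show b * (β₂ * (s γ x - s c₂ x)) = b * β₂ * (s γ x - s c₂ x) by ring, h2,
          zero_mul] at this
        exact this
      simp only [ContinuousMap.add_apply, ContinuousMap.smul_apply, smul_eq_mul, zero_mul]
      linarith
    · set β : ℝ := a * β₁ + b * β₂ with hβdef
      have hβne : β ≠ 0 := ne_of_gt hpos'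
      set w₁ : ℝ := a * β₁ / β with hw₁
      set w₂ : ℝ := b * β₂ / β with hw₂
      have hw₁0 : 0 ≤ w₁ := by positivity
      have hw₂0 : 0 ≤ w₂ := by positivity
      have hwsum : w₁ + w₂ = 1 := by
        rw [hw₁, hw₂, ← add_div, ← hβdef, div_self hβne]
      have hmem₁ : s c₁ ∈ {g : ContinuousMap Y ℝ | ∃ c : V, ∀ x, s c x ≤ g x} :=
        ⟨c₁, fun x => le_refl _⟩
      have hmem₂ : s c₂ ∈ {g : ContinuousMap Y ℝ | ∃ c : V, ∀ x, s c x ≤ g x} :=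
        ⟨c₂, fun x => le_refl _⟩
      obtain ⟨c₃, hc₃⟩ := hsprconv hmem₁ hmem₂ hw₁0 hw₂0 hwsum
      refine ⟨β, hpos'.le, c₃, fun x => ?_⟩
      have e3 : s c₃ x ≤ w₁ * s c₁ x + w₂ * s c₂ x := by
        have := hc₃ x
        simpa [ContinuousMap.add_apply, ContinuousMap.smul_apply, smul_eq_mul] using this
      have e4 : β * s c₃ x ≤ a * β₁ * s c₁ x + b * β₂ * s c₂ x := by
        have := mul_le_mul_of_nonneg_left e3 hpos'.le
        rw [mul_add, show β * (w₁ * s c₁ x) = (β * w₁) * s c₁ x by ring,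
          show β * (w₂ * s c₂ x) = (β * w₂) * s c₂ x by ring,
          show β * w₁ = a * β₁ by rw [hw₁]; field_simp,
          show β * w₂ = b * β₂ by rw [hw₂]; field_simp] at this
        exact this
      have e1 : a * g₁ x ≤ a * β₁ * (s γ x - s c₁ x) := by
        have := mul_le_mul_of_nonneg_left (h₁ x) ha
        linarith [this, show a * (β₁ * (s γ x - s c₁ x)) = a * β₁ * (s γ x - s c₁ x) from by ring]
      have e2 : b * g₂ x ≤ b * β₂ * (s γ x - s c₂ x) := by
        have := mul_le_mul_of_nonneg_left (h₂ x) hb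
        linarith [this, show b * (β₂ * (s γ x - s c₂ x)) = b * β₂ * (s γ x - s c₂ x) from by ring]
      simp only [ContinuousMap.add_apply, ContinuousMap.smul_apply, smul_eq_mul]
      have expand : β * (s γ x - s c₃ x) = β * s γ x - β * s c₃ x := by ring
      have expand2 : β * s γ x = a * β₁ * s γ x + b * β₂ * s γ x := by rw [hβdef]; ring
      nlinarith [e1, e2, e4]
  -- structural facts about B
  have hBdown : ∀ h : C(Y, ℝ), (∀ x, h x ≤ 0) → h ∈ B := by
    intro h hh
    exact ⟨0, fun x => by rw [zero_mul]; exact hh x⟩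
  have hBcone : ∀ g ∈ B, ∀ t : ℝ, 0 ≤ t → t • g ∈ B := by
    rintro g ⟨α, hg⟩ t ht
    refine ⟨t * α, fun x => ?_⟩
    simp only [ContinuousMap.smul_apply, smul_eq_mul]
    calc t * g x ≤ t * (α * ν γ x) := mul_le_mul_of_nonneg_left (hg x) ht
      _ = t * α * ν γ x := by ring
  have hBconv : Convex ℝ B := by
    rintro g₁ ⟨α₁, h₁⟩ g₂ ⟨α₂, h₂⟩ a b ha hb hab
    refine ⟨a * α₁ + b * α₂, fun x => ?_⟩
    have e1 := mul_le_mul_of_nonneg_left (h₁ x) ha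
    have e2 := mul_le_mul_of_nonneg_left (h₂ x) hb
    have e3 : (a * α₁ + b * α₂) * ν γ x = a * (α₁ * ν γ x) + b * (α₂ * ν γ x) := by ring
    simp only [ContinuousMap.add_apply, ContinuousMap.smul_apply, smul_eq_mul]
    linarith
  -- first inclusion : A ⊆ closure B
  have incl1 : A ⊆ closure B := by
    intro g₀ hg₀mem
    by_contra hnot
    obtain ⟨β, hβ, c, hgc⟩ := hg₀mem
    obtain ⟨L, hLpos, hLle, hLg₀, hL1⟩ := sep hBconv hBcone hBdown hnot
    obtain ⟨φ, hφ⟩ := exists_prob L hLpos hL1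
    have hν1 : L (ν γ) ≤ 0 := hLle (ν γ) ⟨1, fun x => by rw [one_mul]⟩
    have hν2 : L (-(ν γ)) ≤ 0 := hLle _ ⟨-1, fun x => by
      simp only [ContinuousMap.neg_apply, neg_one_mul, le_refl]⟩
    rw [map_neg] at hν2
    have hν0 : L (ν γ) = 0 := le_antisymm hν1 (by linarith)
    have hmem : φ ∈ {φ : ProbabilityMeasure Y | ∫ x, ν γ x ∂(φ : Measure Y) = 0} := by
      show ∫ x, ν γ x ∂(φ : Measure Y) = 0
      rw [hφ (ν γ), hν0]
    rw [← heq] at hmem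
    have hc := hmem c
    have hcont : Continuous fun x => β * (s γ x - s c x) :=
      continuous_const.mul ((s γ).continuous.sub (s c).continuous)
    have hInt2 : Integrable (fun x => β * (s γ x - s c x)) (φ : Measure Y) :=
      hcont.integrable_of_hasCompactSupport (HasCompactSupport.of_compactSpace _)
    have h1 : ∫ x, g₀ x ∂(φ : Measure Y) ≤ ∫ x, β * (s γ x - s c x) ∂(φ : Measure Y) :=
      integral_mono (cm_integrable _ g₀) hInt2 (fun x => hgc x)
    have h2 : ∫ x, β * (s γ x - s c x) ∂(φ : Measure Y)
        = β * ((∫ x, s γ x ∂(φ : Measure Y)) - ∫ x, s c x ∂(φ : Measure Y)) := by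
      rw [integral_const_mul, integral_sub (cm_integrable _ (s γ)) (cm_integrable _ (s c))]
    have h3 : β * ((∫ x, s γ x ∂(φ : Measure Y)) - ∫ x, s c x ∂(φ : Measure Y)) ≤ 0 :=
      mul_nonpos_of_nonneg_of_nonpos hβ (by linarith)
    rw [hφ g₀] at h1
    linarith
  -- second inclusion : B ⊆ closure A
  have incl2 : B ⊆ closure A := by
    intro g₀ hg₀mem
    by_contra hnot
    obtain ⟨α, hgα⟩ := hg₀mem
    obtain ⟨L, hLpos, hLle, hLg₀, hL1⟩ := sep hAconv hAcone hAdown hnot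
    obtain ⟨φ, hφ⟩ := exists_prob L hLpos hL1
    have hmem : φ ∈ {φ : ProbabilityMeasure Y |
        ∀ c : V, ∫ x, s γ x ∂(φ : Measure Y) ≤ ∫ x, s c x ∂(φ : Measure Y)} := by
      intro c
      have hAc : L (s γ - s c) ≤ 0 := hLle _ ⟨1, zero_le_one, c, fun x => by
        simp only [ContinuousMap.sub_apply, one_mul, le_refl]⟩
      have hint : ∫ x, (s γ - s c) x ∂(φ : Measure Y) = L (s γ - s c) := hφ (s γ - s c)
      have hsub : ∫ x, (s γ - s c) x ∂(φ : Measure Y)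
          = (∫ x, s γ x ∂(φ : Measure Y)) - ∫ x, s c x ∂(φ : Measure Y) := by
        simp only [ContinuousMap.sub_apply]
        exact integral_sub (cm_integrable _ (s γ)) (cm_integrable _ (s c))
      rw [hsub] at hint
      linarith
    rw [heq] at hmem
    have hν0 : L (ν γ) = 0 := by
      have := hφ (ν γ)
      rw [hmem] at this
      linarith
    have hup : L g₀ ≤ L (α • ν γ) := by
      apply mono_L L hLpos
      intro x
      simpa only [ContinuousMap.smul_apply, smul_eq_mul] using hgα x
    rw [_root_.map_smul, smul_eq_mul, hν0, mul_zero] at hup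
    linarith
  exact Set.Subset.antisymm (closure_minimal incl1 isClosed_closure)
    (closure_minimal incl2 isClosed_closure)
end

section
/- Let γ ∈ [0,1] and let (b₀, b₁) be a probability vector, i.e. b₀, b₁ ≥ 0 and b₀ + b₁ = 1. Then max{ b₀ g₀ + b₁ g₁ : (g₀, g₁) ∈ ℝ², |g₀| + |g₁| ≤ 1, (1−γ)g₀ + γ g₁ ≤ 0 } = |b₁ − γ|, and the maximum is attained at (g₀, g₁) = (−γ, 1−γ) when b₁ > γ and at (g₀, g₁) = (γ, −(1−γ)) otherwise. In other words, for binary outcomes and a mean forecast γ, the rational gambler restricted to the ℓ1 unit ball of available gambles achieves expected value exactly |E_b[Y] − γ|, playing ±(y − γ). -/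
/-! Since `b₀ + b₁ = 1`, the believed expectation of a gamble splits as its expectation under
the forecast plus `(b₁ - γ) (g₁ - g₀)`. The first term is `≤ 0` for an available gamble and
`|g₁ - g₀| ≤ |g₀| + |g₁| ≤ 1`, so the value is at most `|b₁ - γ|`; the gamble `±(y - γ)` has
forecast expectation `0` and `g₁ - g₀ = ±1`, so it attains the bound. -/

section BinaryGamble

variable {b₀ b₁ : ℝ} (γ g₀ g₁ : ℝ)

theorem mul_add_mul_eq_forecast_add (hsum : b₀ + b₁ = 1) :
    b₀ * g₀ + b₁ * g₁ = (1 - γ) * g₀ + γ * g₁ + (b₁ - γ) * (g₁ - g₀) := by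
  linear_combination g₀ * hsum

variable {γ g₀ g₁}

theorem mul_add_mul_le_abs_sub (hsum : b₀ + b₁ = 1) (hnorm : |g₀| + |g₁| ≤ 1)
    (havail : (1 - γ) * g₀ + γ * g₁ ≤ 0) : b₀ * g₀ + b₁ * g₁ ≤ |b₁ - γ| := by
  have hdiff : |g₁ - g₀| ≤ 1 := (abs_sub g₁ g₀).trans (by linarith)
  calc b₀ * g₀ + b₁ * g₁ = (1 - γ) * g₀ + γ * g₁ + (b₁ - γ) * (g₁ - g₀) :=
        mul_add_mul_eq_forecast_add γ g₀ g₁ hsum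
    _ ≤ (b₁ - γ) * (g₁ - g₀) := by linarith
    _ ≤ |b₁ - γ| * |g₁ - g₀| := (le_abs_self _).trans (abs_mul _ _).le
    _ ≤ |b₁ - γ| := mul_le_of_le_one_right (abs_nonneg _) hdiff

theorem abs_add_abs_one_sub_of_mem_Icc (hγ : γ ∈ Set.Icc (0 : ℝ) 1) : |γ| + |1 - γ| = 1 := by
  rw [abs_of_nonneg hγ.1, abs_of_nonneg (sub_nonneg.2 hγ.2)]
  ring

end BinaryGamble

theorem stmt10_general (γ : ℝ) (hγ : γ ∈ Set.Icc (0 : ℝ) 1) (b₀ b₁ : ℝ)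
    (hsum : b₀ + b₁ = 1) :
    IsGreatest {x : ℝ | ∃ g₀ g₁ : ℝ, |g₀| + |g₁| ≤ 1 ∧ (1 - γ) * g₀ + γ * g₁ ≤ 0 ∧
        x = b₀ * g₀ + b₁ * g₁} |b₁ - γ| ∧
    (γ < b₁ → b₀ * (-γ) + b₁ * (1 - γ) = |b₁ - γ|) ∧
    (b₁ ≤ γ → b₀ * γ + b₁ * (-(1 - γ)) = |b₁ - γ|) := by
  have hnorm := (abs_add_abs_one_sub_of_mem_Icc hγ).le
  have hlong (h : γ < b₁) : b₀ * (-γ) + b₁ * (1 - γ) = |b₁ - γ| := by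
    rw [abs_of_pos (sub_pos.2 h)]
    linear_combination (-γ) * hsum
  have hshort (h : b₁ ≤ γ) : b₀ * γ + b₁ * (-(1 - γ)) = |b₁ - γ| := by
    rw [abs_of_nonpos (sub_nonpos.2 h)]
    linear_combination γ * hsum
  refine ⟨⟨?_, ?_⟩, hlong, hshort⟩
  · rcases lt_or_ge γ b₁ with h | h
    · exact ⟨-γ, 1 - γ, by rwa [abs_neg], (by ring : _ = (0 : ℝ)).le, (hlong h).symm⟩
    · exact ⟨γ, -(1 - γ), by rwa [abs_neg], (by ring : _ = (0 : ℝ)).le, (hshort h).symm⟩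
  · rintro _ ⟨g₀, g₁, hg, havail, rfl⟩
    exact mul_add_mul_le_abs_sub hsum hg havail

/-- For binary outcomes and a mean forecast `γ`, the rational gambler restricted to the
ℓ1 unit ball of available gambles achieves expected value exactly `|b₁ − γ|`; the maximum
is attained at `(−γ, 1−γ)` when `b₁ > γ` and at `(γ, −(1−γ))` otherwise. -/
theorem stmt10 (γ : ℝ) (hγ : γ ∈ Set.Icc (0 : ℝ) 1) (b₀ b₁ : ℝ)
    (hb₀ : 0 ≤ b₀) (hb₁ : 0 ≤ b₁) (hsum : b₀ + b₁ = 1) :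
    IsGreatest {x : ℝ | ∃ g₀ g₁ : ℝ, |g₀| + |g₁| ≤ 1 ∧ (1 - γ) * g₀ + γ * g₁ ≤ 0 ∧
        x = b₀ * g₀ + b₁ * g₁} |b₁ - γ| ∧
    (γ < b₁ → b₀ * (-γ) + b₁ * (1 - γ) = |b₁ - γ|) ∧
    (b₁ ≤ γ → b₀ * γ + b₁ * (-(1 - γ)) = |b₁ - γ|) :=
  stmt10_general γ hγ b₀ b₁ hsum
end

section
/- Let T be a finite nonempty set, Y any set, V a nonempty set, ℓ : Y × V → ℝ, y : T → Y, v : T → V, and let 𝒮 be a nonempty collection of subsets of T. For γ ∈ V and S ∈ 𝒮 set T_{γ,S} := {t ∈ S : v_t = γ}, and suppose for each γ in the range of v and each S ∈ 𝒮 with T_{γ,S} ≠ ∅ there exists γ*_{γ,S} ∈ V with Σ_{t∈T_{γ,S}} ℓ(y_t, γ*_{γ,S}) ≤ Σ_{t∈T_{γ,S}} ℓ(y_t, c) for all c ∈ V. Then sup_{S∈𝒮} Σ_{γ∈range(v)} |(1/|T|) Σ_{t∈T_{γ,S}} (ℓ(y_t, γ) − ℓ(y_t, γ*_{γ,S}))|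 = (1/|T|) · sup_{S∈𝒮} sup_{σ : V → V} Σ_{t∈S} (ℓ(y_t, v_t) − ℓ(y_t, σ(v_t))), the group-wise swap regret score. -/
/-!
Grouping the rounds of `S` by the forecast value `γ`, the gain of a swap `σ` is a sum over `γ` of
the gains of replacing `γ` by `σ γ` on `T_{γ,S}`. Each of these is maximised by `γ*_{γ,S}`, which
`σ` may pick independently for every `γ`, so the swap regret on `S` is the sum of the optimal
per-value gains. These are nonnegative, hence the absolute values on the left are harmless.
-/

open Finset

section SwapRegret

variable {T V : Type*} [DecidableEq V] (f : T → V → ℝ) (v : T → V) {S : Finset T} {F : Finset V}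

theorem sum_swap_eq_sum_fiberwise (hF : ∀ t ∈ S, v t ∈ F) (σ : V → V) :
    ∑ t ∈ S, (f t (v t) - f t (σ (v t))) =
      ∑ γ ∈ F, ∑ t ∈ S with v t = γ, (f t γ - f t (σ γ)) := by
  rw [← sum_fiberwise_of_maps_to hF]
  refine sum_congr rfl fun γ _ => sum_congr rfl fun t ht => ?_
  rw [(mem_filter.mp ht).2]

variable {f v}

theorem sum_fiber_swap_le_of_isMin {γ a : V}
    (hmin : ∀ c, ∑ t ∈ S with v t = γ, f t a ≤ ∑ t ∈ S with v t = γ, f t c) (c : V) :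
    ∑ t ∈ S with v t = γ, (f t γ - f t c) ≤ ∑ t ∈ S with v t = γ, (f t γ - f t a) := by
  simp only [sum_sub_distrib]
  exact sub_le_sub_left (hmin c) _

theorem ciSup_sum_swap_eq_of_isMin (hF : ∀ t ∈ S, v t ∈ F) (γstar : V → V)
    (hmin : ∀ γ ∈ F, ∀ c, ∑ t ∈ S with v t = γ, f t (γstar γ) ≤ ∑ t ∈ S with v t = γ, f t c) :
    ⨆ σ : V → V, ∑ t ∈ S, (f t (v t) - f t (σ (v t))) =
      ∑ γ ∈ F, ∑ t ∈ S with v t = γ, (f t γ - f t (γstar γ)) := by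
  have hle : ∀ σ : V → V, ∑ t ∈ S, (f t (v t) - f t (σ (v t))) ≤
      ∑ γ ∈ F, ∑ t ∈ S with v t = γ, (f t γ - f t (γstar γ)) := fun σ => by
    rw [sum_swap_eq_sum_fiberwise f v hF]
    exact sum_le_sum fun γ hγ => sum_fiber_swap_le_of_isMin (hmin γ hγ) (σ γ)
  have : Nonempty (V → V) := ⟨γstar⟩
  refine le_antisymm (ciSup_le hle) ?_
  rw [← sum_swap_eq_sum_fiberwise f v hF γstar]
  exact le_ciSup ⟨_, Set.forall_mem_range.mpr hle⟩ γstar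

end SwapRegret

theorem stmt13_general {T : Type*} [Fintype T] {Y V : Type*}
    [DecidableEq V]
    (ℓ : Y → V → ℝ) (y : T → Y) (v : T → V)
    (𝒮 : Set (Finset T))
    (γstar : V → Finset T → V)
    (hγstar : ∀ γ ∈ Finset.image v Finset.univ, ∀ S ∈ 𝒮,
      (S.filter (fun t => v t = γ)).Nonempty → ∀ c : V,
      (∑ t ∈ S.filter (fun t => v t = γ), ℓ (y t) (γstar γ S)) ≤
        ∑ t ∈ S.filter (fun t => v t = γ), ℓ (y t) c) :
    (⨆ S ∈ 𝒮, ∑ γ ∈ Finset.image v Finset.univ,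
        |(Fintype.card T : ℝ)⁻¹ * ∑ t ∈ S.filter (fun t => v t = γ),
          (ℓ (y t) γ - ℓ (y t) (γstar γ S))|)
      = (Fintype.card T : ℝ)⁻¹ *
          ⨆ S ∈ 𝒮, ⨆ σ : V → V, ∑ t ∈ S, (ℓ (y t) (v t) - ℓ (y t) (σ (v t))) := by
  have hc : 0 ≤ (Fintype.card T : ℝ)⁻¹ := by positivity
  have hF : ∀ S : Finset T, ∀ t ∈ S, v t ∈ image v univ :=
    fun _ t _ => mem_image_of_mem v (mem_univ t)
  have hmin : ∀ S ∈ 𝒮, ∀ γ ∈ image v univ, ∀ c,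
      ∑ t ∈ S with v t = γ, ℓ (y t) (γstar γ S) ≤ ∑ t ∈ S with v t = γ, ℓ (y t) c :=
    fun S hS γ hγ c => (S.filter (v · = γ)).eq_empty_or_nonempty.elim
      (fun hempty => by simp only [hempty, sum_empty, le_refl]) (hγstar γ hγ S hS · c)
  have hterm : ∀ S ∈ 𝒮, ∑ γ ∈ image v univ,
      |(Fintype.card T : ℝ)⁻¹ * ∑ t ∈ S with v t = γ, (ℓ (y t) γ - ℓ (y t) (γstar γ S))| =
      (Fintype.card T : ℝ)⁻¹ * ⨆ σ : V → V, ∑ t ∈ S, (ℓ (y t) (v t) - ℓ (y t) (σ (v t))) := by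
    intro S hS
    rw [ciSup_sum_swap_eq_of_isMin (f := fun t => ℓ (y t)) (hF S) _ (hmin S hS), mul_sum]
    refine sum_congr rfl fun γ hγ => abs_of_nonneg (mul_nonneg hc ?_)
    simpa using sum_fiber_swap_le_of_isMin (hmin S hS γ hγ) γ
  rw [Real.mul_iSup_of_nonneg hc]
  refine iSup_congr fun S => ?_
  rw [Real.mul_iSup_of_nonneg hc]
  exact iSup_congr (hterm S)

/-- Recovery of the group-wise swap regret score: if on each nonempty subgroup `T_{γ,S}`
the value `γ*_{γ,S}` minimizes the cumulative loss, then the supremum over groups of the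
aggregated absolute capitals equals `1/|T|` times the group-wise swap regret. -/
theorem stmt13 {T : Type*} [Fintype T] [Nonempty T] {Y V : Type*} [Nonempty V]
    [DecidableEq V]
    (ℓ : Y → V → ℝ) (y : T → Y) (v : T → V)
    (𝒮 : Set (Finset T)) (h𝒮 : 𝒮.Nonempty)
    (γstar : V → Finset T → V)
    (hγstar : ∀ γ ∈ Finset.image v Finset.univ, ∀ S ∈ 𝒮,
      (S.filter (fun t => v t = γ)).Nonempty → ∀ c : V,
      (∑ t ∈ S.filter (fun t => v t = γ), ℓ (y t) (γstar γ S)) ≤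
        ∑ t ∈ S.filter (fun t => v t = γ), ℓ (y t) c) :
    (⨆ S ∈ 𝒮, ∑ γ ∈ Finset.image v Finset.univ,
        |(Fintype.card T : ℝ)⁻¹ * ∑ t ∈ S.filter (fun t => v t = γ),
          (ℓ (y t) γ - ℓ (y t) (γstar γ S))|)
      = (Fintype.card T : ℝ)⁻¹ *
          ⨆ S ∈ 𝒮, ⨆ σ : V → V, ∑ t ∈ S, (ℓ (y t) (v t) - ℓ (y t) (σ (v t))) :=
  stmt13_general ℓ y v 𝒮 γstar hγstar
end

section
/- Let T be a finite nonempty set, y : T → {0,1}, and v : T → [0,1]. For γ in the range of v let T_γ := {t ∈ T : v_t = γ}, p̄_γ := (1/|T_γ|) Σ_{t∈T_γ} y_t, and define the gamble g*_γ : {0,1} → ℝ by g*_γ(y) = y − γ if p̄_γ > γ and g*_γ(y) = γ − y otherwise. Then: (i) g*_γ maximizes (1−p̄_γ) g(0) + p̄_γ g(1) over all g : {0,1} → ℝ with |g(0)| + |g(1)| ≤ 1 and (1−γ)g(0) + γ g(1) ≤ 0; (ii) its realized capital K_γ := (1/|T|) Σ_{t∈T_γ} g*_γ(y_t) equals (1/|T|)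 |Σ_{t∈T_γ} (y_t − γ)|; (iii) Σ_{γ∈range(v)} (|T|/|T_γ|) K_γ² = Σ_{γ∈range(v)} (|T_γ|/|T|)(p̄_γ − γ)², the Foster–Vohra calibration score, and Σ_{γ∈range(v)} |K_γ| = Σ_{γ∈range(v)} (|T_γ|/|T|) |p̄_γ − γ|, the expected calibration error. -/
/-- The prediction-group: rounds on which the value `γ` was forecast. -/
noncomputable def predGroup {T : Type*} [Fintype T] (v : T → ℝ) (γ : ℝ) : Finset T :=
  Finset.univ.filter (fun t => v t = γ)

/-- The empirical frequency of outcome `1` among rounds where `γ` was forecast. -/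
noncomputable def pbar {T : Type*} [Fintype T] (y v : T → ℝ) (γ : ℝ) : ℝ :=
  ((predGroup v γ).card : ℝ)⁻¹ * ∑ t ∈ predGroup v γ, y t

/-- The optimal gamble of the rational gambler: `y − γ` if `p̄_γ > γ`, else `γ − y`. -/
noncomputable def gstar {T : Type*} [Fintype T] (y v : T → ℝ) (γ : ℝ) : ℝ → ℝ :=
  fun x => if γ < pbar y v γ then x - γ else γ - x

/-- The realized capital of the gambler associated with the forecast value `γ`. -/
noncomputable def Kcap {T : Type*} [Fintype T] (y v : T → ℝ) (γ : ℝ) : ℝ :=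
  (Fintype.card T : ℝ)⁻¹ * ∑ t ∈ predGroup v γ, gstar y v γ (y t)

lemma card_pos' {T : Type*} [Fintype T] (v : T → ℝ) {γ : ℝ}
    (hγ : γ ∈ Finset.image v Finset.univ) : 0 < ((predGroup v γ).card : ℝ) := by
  obtain ⟨t, _, ht⟩ := Finset.mem_image.mp hγ
  exact_mod_cast Finset.card_pos.mpr ⟨t, by simp [predGroup, ht]⟩

lemma sum_sub_eq {T : Type*} [Fintype T] (y v : T → ℝ) {γ : ℝ}
    (hn : (0:ℝ) < (predGroup v γ).card) :
    ∑ t ∈ predGroup v γ, (y t - γ) = (predGroup v γ).card * (pbar y v γ - γ) := by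
  rw [Finset.sum_sub_distrib, Finset.sum_const, pbar, nsmul_eq_mul]
  field_simp

lemma sum_gstar {T : Type*} [Fintype T] (y v : T → ℝ) {γ : ℝ}
    (hn : (0:ℝ) < (predGroup v γ).card) :
    ∑ t ∈ predGroup v γ, gstar y v γ (y t) = |∑ t ∈ predGroup v γ, (y t - γ)| := by
  by_cases h : γ < pbar y v γ
  · simp only [gstar, if_pos h]
    rw [sum_sub_eq y v hn, abs_of_pos (by nlinarith)]
  · simp only [gstar, if_neg h]
    have h2 : ∑ t ∈ predGroup v γ, (γ - y t) = -∑ t ∈ predGroup v γ, (y t - γ) := by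
      rw [← Finset.sum_neg_distrib]; exact Finset.sum_congr rfl fun _ _ => by ring
    rw [h2, sum_sub_eq y v hn, abs_of_nonpos (by nlinarith [not_lt.mp h])]

/-- Recovery of the calibration score: (i) `g*_γ` is feasible and maximizes the expected
value against the empirical belief over all gambles in the ℓ1 unit ball that are available
for the mean forecast `γ`; (ii) its realized capital is `(1/|T|)|Σ_{t∈T_γ}(y_t − γ)|`;
(iii) the reweighted squared capitals sum to the Foster–Vohra calibration score and the
absolute capitals sum to the expected calibration error. -/
theorem stmt14 {T : Type*} [Fintype T] [Nonempty T]
    (y : T → ℝ) (hy : ∀ t, y t = 0 ∨ y t = 1)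
    (v : T → ℝ) (hv : ∀ t, v t ∈ Set.Icc (0 : ℝ) 1) :
    (∀ γ ∈ Finset.image v Finset.univ,
      ((|gstar y v γ 0| + |gstar y v γ 1| ≤ 1 ∧
        (1 - γ) * gstar y v γ 0 + γ * gstar y v γ 1 ≤ 0) ∧
       (∀ g : ℝ → ℝ, |g 0| + |g 1| ≤ 1 → (1 - γ) * g 0 + γ * g 1 ≤ 0 →
          (1 - pbar y v γ) * g 0 + pbar y v γ * g 1 ≤
            (1 - pbar y v γ) * gstar y v γ 0 + pbar y v γ * gstar y v γ 1)) ∧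
      Kcap y v γ = (Fintype.card T : ℝ)⁻¹ * |∑ t ∈ predGroup v γ, (y t - γ)|) ∧
    ((∑ γ ∈ Finset.image v Finset.univ,
        (Fintype.card T : ℝ) / ((predGroup v γ).card : ℝ) * (Kcap y v γ) ^ 2)
      = ∑ γ ∈ Finset.image v Finset.univ,
          ((predGroup v γ).card : ℝ) / (Fintype.card T : ℝ) * (pbar y v γ - γ) ^ 2) ∧
    ((∑ γ ∈ Finset.image v Finset.univ, |Kcap y v γ|)
      = ∑ γ ∈ Finset.image v Finset.univ,
          ((predGroup v γ).card : ℝ) / (Fintype.card T : ℝ) * |pbar y v γ - γ|) := by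
  have hN : (0:ℝ) < (Fintype.card T : ℝ) := by exact_mod_cast Fintype.card_pos
  have hK : ∀ γ ∈ Finset.image v Finset.univ,
      Kcap y v γ = (Fintype.card T : ℝ)⁻¹ * ((predGroup v γ).card * |pbar y v γ - γ|) := by
    intro γ hγ
    have hn := card_pos' v hγ
    rw [Kcap, sum_gstar y v hn, sum_sub_eq y v hn, abs_mul, abs_of_pos hn]
  refine ⟨?_, ?_, ?_⟩
  · intro γ hγ
    have hn := card_pos' v hγ
    obtain ⟨t, -, ht⟩ := Finset.mem_image.mp hγ
    have hγ0 : 0 ≤ γ := ht ▸ (hv t).1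
    have hγ1 : γ ≤ 1 := ht ▸ (hv t).2
    refine ⟨⟨⟨?_, ?_⟩, ?_⟩, ?_⟩
    · by_cases h : γ < pbar y v γ
      · simp only [gstar, if_pos h]
        rw [abs_of_nonpos (by linarith), abs_of_nonneg (by linarith)]; linarith
      · simp only [gstar, if_neg h]
        rw [abs_of_nonneg (by linarith), abs_of_nonpos (by linarith)]; linarith
    · by_cases h : γ < pbar y v γ
      · simp only [gstar, if_pos h]; nlinarith []
      · simp only [gstar, if_neg h]; nlinarith []
    · intro g hg1 hg2
      have e1 : (pbar y v γ - γ) * (g 1 - g 0) ≤ |pbar y v γ - γ| * (|g 0| + |g 1|) := by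
        calc (pbar y v γ - γ) * (g 1 - g 0)
            ≤ |(pbar y v γ - γ) * (g 1 - g 0)| := le_abs_self _
          _ = |pbar y v γ - γ| * |g 1 - g 0| := abs_mul _ _
          _ ≤ |pbar y v γ - γ| * (|g 1| + |g 0|) :=
              mul_le_mul_of_nonneg_left (abs_sub _ _) (abs_nonneg _)
          _ = |pbar y v γ - γ| * (|g 0| + |g 1|) := by ring
      have e2 : |pbar y v γ - γ| * (|g 0| + |g 1|) ≤ |pbar y v γ - γ| := by
        nlinarith [abs_nonneg (pbar y v γ - γ)]
      have e3 : (1 - pbar y v γ) * gstar y v γ 0 + pbar y v γ * gstar y v γ 1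
          = |pbar y v γ - γ| := by
        by_cases h : γ < pbar y v γ
        · simp only [gstar, if_pos h]; rw [abs_of_pos (by linarith)]; ring
        · simp only [gstar, if_neg h]; rw [abs_of_nonpos (by linarith [not_lt.mp h])]; ring
      rw [e3]; nlinarith [e1, e2, hg2]
    · rw [Kcap, sum_gstar y v hn]
  · refine Finset.sum_congr rfl fun γ hγ => ?_
    have hn := card_pos' v hγ
    rw [hK γ hγ, mul_pow, mul_pow, sq_abs]
    field_simp
  · refine Finset.sum_congr rfl fun γ hγ => ?_
    have hn := card_pos' v hγ
    rw [hK γ hγ, abs_of_nonneg (by positivity)]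
    field_simp
end

section
/- Let T be a finite nonempty index set and y : T → 𝒴. For each t ∈ T let 𝒫_t ⊆ Δ(𝒴), let A_t := {g ∈ C(𝒴) : ∫ g dφ ≤ 0 for all φ ∈ 𝒫_t} be the available gambles, let b_t be a belief (a Borel probability measure on 𝒴 or the vacuous belief □), and let G_t ⊆ G'_t ⊆ C(𝒴) be restriction sets with 0 ∈ G_t. Assume: (a) whenever b_t = b_s then 𝒫_t = 𝒫_s, G_t = G_s and G'_t = G'_s; (b) the beliefs (b_t) are aligned to truth; (c) g, g' : T → C(𝒴) are gamblers such that if b_t = □ then g_t = g'_t = 0, and if b_t is a measure then g_t ∈ A_t ∩ G_t maximizes h ↦ ∫ h db_t over A_t ∩ G_t, g'_t ∈ A_t ∩ G'_t maximizes h ↦ ∫ h db_t over A_t ∩ G'_t, and g_t = g_s, g'_t = g'_s whenever b_t = b_s. Then Σ_{t∈T} g_t(y_t) ≤ Σ_{t∈T} g'_t(y_t), i.e. the capital of the gambler with the larger restriction set dominates. -/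
open MeasureTheory
open scoped NNReal Classical

/-- Hierarchy of capital by order on restrictions: two fair, restricted and rational
gamblers with the same truth-aligned beliefs, where the restriction set of the second
contains that of the first (and protocol data only depend on the belief), satisfy
`Σ_t g_t(y_t) ≤ Σ_t g'_t(y_t)`. Beliefs are `Option`-valued: `none` is the vacuous
belief `□`. -/
theorem stmt15 {Y : Type*} [TopologicalSpace Y] [CompactSpace Y]
    [TopologicalSpace.MetrizableSpace Y] [MeasurableSpace Y] [BorelSpace Y]
    {T : Type*} [Fintype T] [Nonempty T]
    (y : T → Y)
    (P : T → Set (ProbabilityMeasure Y))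
    (b : T → Option (ProbabilityMeasure Y))
    (G G' : T → Set (ContinuousMap Y ℝ))
    (hsub : ∀ t, G t ⊆ G' t)
    (h0 : ∀ t, (0 : ContinuousMap Y ℝ) ∈ G t)
    (hconst : ∀ t u, b t = b u → P t = P u ∧ G t = G u ∧ G' t = G' u)
    (haligned : ∀ t, ∀ β : ProbabilityMeasure Y, b t = some β →
      (β : Measure Y) =
        ((Finset.univ.filter (fun u => b u = b t)).card : ℝ≥0)⁻¹ •
          ∑ u ∈ Finset.univ.filter (fun u => b u = b t), Measure.dirac (y u))
    (g g' : T → ContinuousMap Y ℝ)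
    (hgvac : ∀ t, b t = none → g t = 0)
    (hg'vac : ∀ t, b t = none → g' t = 0)
    (hg : ∀ t, ∀ β : ProbabilityMeasure Y, b t = some β →
      g t ∈ {h : ContinuousMap Y ℝ | ∀ φ ∈ P t, ∫ x, h x ∂(φ : Measure Y) ≤ 0} ∩ G t ∧
      ∀ h ∈ {h : ContinuousMap Y ℝ | ∀ φ ∈ P t, ∫ x, h x ∂(φ : Measure Y) ≤ 0} ∩ G t,
        ∫ x, h x ∂(β : Measure Y) ≤ ∫ x, g t x ∂(β : Measure Y))
    (hg' : ∀ t, ∀ β : ProbabilityMeasure Y, b t = some β →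
      g' t ∈ {h : ContinuousMap Y ℝ | ∀ φ ∈ P t, ∫ x, h x ∂(φ : Measure Y) ≤ 0} ∩ G' t ∧
      ∀ h ∈ {h : ContinuousMap Y ℝ | ∀ φ ∈ P t, ∫ x, h x ∂(φ : Measure Y) ≤ 0} ∩ G' t,
        ∫ x, h x ∂(β : Measure Y) ≤ ∫ x, g' t x ∂(β : Measure Y))
    (hgconst : ∀ t u, b t = b u → g t = g u)
    (hg'const : ∀ t u, b t = b u → g' t = g' u) :
    (∑ t, g t (y t)) ≤ ∑ t, g' t (y t) := by
  classical
  set n : T → ℝ := fun t => ((Finset.univ.filter fun u => b u = b t).card : ℝ) with hn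
  have hmem : ∀ t, t ∈ Finset.univ.filter fun u => b u = b t := by
    intro t; simp
  have hnpos : ∀ t, 0 < n t := by
    intro t
    have : 0 < (Finset.univ.filter fun u => b u = b t).card :=
      Finset.card_pos.2 ⟨t, hmem t⟩
    simp only [hn]
    exact_mod_cast this
  -- the class of u equals the class of t whenever b u = b t
  have hclass : ∀ t u, b u = b t →
      (Finset.univ.filter fun v => b v = b u) = (Finset.univ.filter fun v => b v = b t) := by
    intro t u h
    ext v; simp only [Finset.mem_filter, Finset.mem_univ, true_and, h]
  have hneq : ∀ t u, b u = b t → n u = n t := by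
    intro t u h; simp only [hn, hclass t u h]
  -- key sum-swapping identity
  have swap : ∀ c : T → ContinuousMap Y ℝ, (∀ t u, b t = b u → c t = c u) →
      ∑ t, c t (y t) =
        ∑ t, (n t)⁻¹ * ∑ u ∈ Finset.univ.filter (fun u => b u = b t), c t (y u) := by
    intro c hc
    have step1 : ∀ t : T,
        (n t)⁻¹ * ∑ u ∈ Finset.univ.filter (fun u => b u = b t), c t (y u)
          = ∑ u ∈ Finset.univ.filter (fun u => b u = b t), (n u)⁻¹ * c u (y u) := by
      intro t
      rw [Finset.mul_sum]
      refine Finset.sum_congr rfl fun u hu => ?_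
      simp only [Finset.mem_filter, Finset.mem_univ, true_and] at hu
      rw [hneq t u hu, hc u t hu]
    rw [Finset.sum_congr rfl fun t _ => step1 t]
    rw [Finset.sum_comm' (s := Finset.univ) (t := fun t => Finset.univ.filter fun u => b u = b t)
      (t' := Finset.univ) (s' := fun u => Finset.univ.filter fun t => b u = b t)
      (f := fun _ u => (n u)⁻¹ * c u (y u))
      (by intro t u; simp [eq_comm])]
    refine Finset.sum_congr rfl fun u _ => ?_
    rw [Finset.sum_const, nsmul_eq_mul]
    have hcard : ((Finset.univ.filter fun t => b u = b t).card : ℝ) = n u := by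
      simp only [hn]; congr 1; apply Finset.card_nbij' id id <;> simp [eq_comm, Set.MapsTo, Set.LeftInvOn, Set.RightInvOn]
    rw [hcard, mul_inv_cancel_left₀ (hnpos u).ne']
  -- integral of a continuous function against a belief measure
  have hint : ∀ t (β : ProbabilityMeasure Y), b t = some β → ∀ f : ContinuousMap Y ℝ,
      ∫ x, f x ∂(β : Measure Y)
        = (n t)⁻¹ * ∑ u ∈ Finset.univ.filter (fun u => b u = b t), f (y u) := by
    intro t β hβ f
    rw [haligned t β hβ, integral_smul_nnreal_measure,
      integral_finset_sum_measure (fun u _ =>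
        f.continuous.integrable_of_hasCompactSupport (HasCompactSupport.of_compactSpace _))]
    rw [Finset.sum_congr rfl fun u _ => integral_dirac' _ _ f.continuous.stronglyMeasurable]
    simp [hn, NNReal.smul_def]
  rw [swap g hgconst, swap g' hg'const]
  refine Finset.sum_le_sum fun t _ => ?_
  rcases h : b t with _ | β
  · -- vacuous
    simp [hgvac t h, hg'vac t h]
  · rw [← h]
    have h1 := (hint t β h (g t)).symm
    have h2 := (hint t β h (g' t)).symm
    rw [h1, h2]
    obtain ⟨hgmem, _⟩ := hg t β h
    obtain ⟨_, hmax⟩ := hg' t β h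
    exact hmax (g t) ⟨hgmem.1, hsub t hgmem.2⟩
end

section
/- Let ℓ : {0,1} × [0,1] → [−1,1] be a consistent scoring function for the mean, i.e. for all p, c ∈ [0,1]: (1−p)ℓ(0,p) + pℓ(1,p) ≤ (1−p)ℓ(0,c) + pℓ(1,c). Let T be a finite nonempty set, y : T → {0,1}, v : T → [0,1], and T_γ := {t ∈ T : v_t = γ}. Then the swap regret is bounded by four times the (unnormalized) expected calibration error: sup_{σ : [0,1] → [0,1]} Σ_{t∈T} (ℓ(y_t, v_t) − ℓ(y_t, σ(v_t))) ≤ 4 Σ_{γ ∈ range(v)} |Σ_{t∈T_γ} (y_t − γ)|. -/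
/-!
On the rounds where `γ` was forecast, the total score of any constant forecast `c` is `n` times
the expected score of `c` under the empirical frequency `q` of ones, so the swap regret on that
bin is `n` times the regret of `γ` against `c` under `q`. Consistency at `q` lets us replace `c`
by `q`, and consistency at `γ` shows that the remaining regret of `γ` against `q` is at most
`(q - γ)` times a combination of four scores, hence at most `4 |q - γ|`; and `n |q - γ|` is the
calibration error of the bin.
-/

open Finset

def expectedScore (ℓ : ℝ → ℝ → ℝ) (p c : ℝ) : ℝ := (1 - p) * ℓ 0 c + p * ℓ 1 c

lemma expectedScore_of_mem_zero_one (ℓ : ℝ → ℝ → ℝ) {y : ℝ} (hy : y = 0 ∨ y = 1) (c : ℝ) :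
    expectedScore ℓ y c = ℓ y c := by
  rcases hy with rfl | rfl <;> simp [expectedScore]

lemma sum_expectedScore {T : Type*} (ℓ : ℝ → ℝ → ℝ) {A : Finset T} (hA : A.Nonempty)
    (y : T → ℝ) (c : ℝ) :
    ∑ t ∈ A, expectedScore ℓ (y t) c
      = #A * expectedScore ℓ ((∑ t ∈ A, y t) / #A) c := by
  have hn : (#A : ℝ) ≠ 0 := by exact_mod_cast hA.card_pos.ne'
  simp only [expectedScore, sub_mul, one_mul, sum_add_distrib, sum_sub_distrib, ← sum_mul,
    sum_const, nsmul_eq_mul]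
  field_simp

lemma expectedScore_sub_le (ℓ : ℝ → ℝ → ℝ)
    (hbound : ∀ a ∈ ({0, 1} : Set ℝ), ∀ c ∈ Set.Icc (0 : ℝ) 1,
      ℓ a c ∈ Set.Icc (-1 : ℝ) 1)
    (hcons : ∀ p ∈ Set.Icc (0 : ℝ) 1, ∀ c ∈ Set.Icc (0 : ℝ) 1,
      (1 - p) * ℓ 0 p + p * ℓ 1 p ≤ (1 - p) * ℓ 0 c + p * ℓ 1 c)
    {p γ c : ℝ} (hp : p ∈ Set.Icc (0 : ℝ) 1) (hγ : γ ∈ Set.Icc (0 : ℝ) 1)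
    (hc : c ∈ Set.Icc (0 : ℝ) 1) :
    expectedScore ℓ p γ - expectedScore ℓ p c ≤ 4 * |p - γ| := by
  have hp_c := hcons p hp c hc
  have hγ_p := hcons γ hγ p hp
  obtain ⟨h0γ, h0γ'⟩ := hbound 0 (by simp) γ hγ
  obtain ⟨h1γ, h1γ'⟩ := hbound 1 (by simp) γ hγ
  obtain ⟨h0p, h0p'⟩ := hbound 0 (by simp) p hp
  obtain ⟨h1p, h1p'⟩ := hbound 1 (by simp) p hp
  have hd : |ℓ 1 γ - ℓ 1 p - ℓ 0 γ + ℓ 0 p| ≤ 4 := abs_le.2 ⟨by linarith, by linarith⟩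
  calc expectedScore ℓ p γ - expectedScore ℓ p c
      ≤ expectedScore ℓ p γ - expectedScore ℓ p p := by unfold expectedScore; linarith
    _ ≤ (p - γ) * (ℓ 1 γ - ℓ 1 p - ℓ 0 γ + ℓ 0 p) := by unfold expectedScore; nlinarith
    _ ≤ |p - γ| * |ℓ 1 γ - ℓ 1 p - ℓ 0 γ + ℓ 0 p| := (le_abs_self _).trans (abs_mul _ _).le
    _ ≤ 4 * |p - γ| := by rw [mul_comm 4]; gcongr

lemma sum_score_sub_le_four_mul_abs_sum {T : Type*} (ℓ : ℝ → ℝ → ℝ)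
    (hbound : ∀ a ∈ ({0, 1} : Set ℝ), ∀ c ∈ Set.Icc (0 : ℝ) 1,
      ℓ a c ∈ Set.Icc (-1 : ℝ) 1)
    (hcons : ∀ p ∈ Set.Icc (0 : ℝ) 1, ∀ c ∈ Set.Icc (0 : ℝ) 1,
      (1 - p) * ℓ 0 p + p * ℓ 1 p ≤ (1 - p) * ℓ 0 c + p * ℓ 1 c)
    (A : Finset T) (y : T → ℝ) (hy : ∀ t ∈ A, y t = 0 ∨ y t = 1)
    {γ c : ℝ} (hγ : γ ∈ Set.Icc (0 : ℝ) 1) (hc : c ∈ Set.Icc (0 : ℝ) 1) :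
    ∑ t ∈ A, (ℓ (y t) γ - ℓ (y t) c) ≤ 4 * |∑ t ∈ A, (y t - γ)| := by
  rcases A.eq_empty_or_nonempty with rfl | hA
  · simp
  have hn : (0 : ℝ) < #A := by exact_mod_cast hA.card_pos
  set q := (∑ t ∈ A, y t) / #A
  have hy01 : ∀ t ∈ A, y t ∈ Set.Icc (0 : ℝ) 1 := fun t ht => by
    rcases hy t ht with h | h <;> simp [h]
  have hq : q ∈ Set.Icc (0 : ℝ) 1 :=
    ⟨div_nonneg (sum_nonneg fun t ht => (hy01 t ht).1) hn.le,
      div_le_one_of_le₀ ((sum_le_card_nsmul A y 1 fun t ht => (hy01 t ht).2).trans_eq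
        (by simp)) hn.le⟩
  have hscore : ∀ d, ∑ t ∈ A, ℓ (y t) d = #A * expectedScore ℓ q d := fun d => by
    rw [← sum_expectedScore ℓ hA]
    exact sum_congr rfl fun t ht => (expectedScore_of_mem_zero_one ℓ (hy t ht) d).symm
  have hcal : ∑ t ∈ A, (y t - γ) = #A * (q - γ) := by
    rw [sum_sub_distrib, sum_const, nsmul_eq_mul, mul_sub, mul_div_cancel₀ _ hn.ne']
  calc ∑ t ∈ A, (ℓ (y t) γ - ℓ (y t) c)
      = #A * (expectedScore ℓ q γ - expectedScore ℓ q c) := by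
        rw [sum_sub_distrib, hscore, hscore, mul_sub]
    _ ≤ #A * (4 * |q - γ|) := by gcongr; exact expectedScore_sub_le ℓ hbound hcons hq hγ hc
    _ = 4 * |∑ t ∈ A, (y t - γ)| := by rw [hcal, abs_mul, abs_of_pos hn]; ring

theorem stmt17_general (ℓ : ℝ → ℝ → ℝ)
    (hbound : ∀ a ∈ ({0, 1} : Set ℝ), ∀ c ∈ Set.Icc (0 : ℝ) 1,
      ℓ a c ∈ Set.Icc (-1 : ℝ) 1)
    (hcons : ∀ p ∈ Set.Icc (0 : ℝ) 1, ∀ c ∈ Set.Icc (0 : ℝ) 1,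
      (1 - p) * ℓ 0 p + p * ℓ 1 p ≤ (1 - p) * ℓ 0 c + p * ℓ 1 c)
    {T : Type*} [Fintype T]
    (y : T → ℝ) (hy : ∀ t, y t = 0 ∨ y t = 1)
    (v : T → ℝ) (hv : ∀ t, v t ∈ Set.Icc (0 : ℝ) 1) :
    (⨆ σ : {f : ℝ → ℝ // ∀ x ∈ Set.Icc (0 : ℝ) 1, f x ∈ Set.Icc (0 : ℝ) 1},
        ∑ t, (ℓ (y t) (v t) - ℓ (y t) (σ.1 (v t))))
      ≤ 4 * ∑ γ ∈ Finset.image v Finset.univ,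
          |∑ t ∈ Finset.univ.filter (fun t => v t = γ), (y t - γ)| := by
  have : Nonempty {f : ℝ → ℝ // ∀ x ∈ Set.Icc (0 : ℝ) 1, f x ∈ Set.Icc (0 : ℝ) 1} :=
    ⟨⟨id, fun _ hx => hx⟩⟩
  refine ciSup_le fun σ => ?_
  rw [← sum_fiberwise_of_maps_to (g := v) fun t _ => mem_image_of_mem v (mem_univ t), mul_sum]
  refine sum_le_sum fun γ hγ => ?_
  obtain ⟨t₀, -, rfl⟩ := mem_image.1 hγ
  calc ∑ t ∈ univ.filter (fun t => v t = v t₀), (ℓ (y t) (v t) - ℓ (y t) (σ.1 (v t)))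
      = ∑ t ∈ univ.filter (fun t => v t = v t₀), (ℓ (y t) (v t₀) - ℓ (y t) (σ.1 (v t₀))) :=
        sum_congr rfl fun t ht => by rw [(mem_filter.1 ht).2]
    _ ≤ _ := sum_score_sub_le_four_mul_abs_sum ℓ hbound hcons _ y (fun t _ => hy t) (hv t₀)
        (σ.2 _ (hv t₀))

/-- Recovery of Theorem 12 of Kleinberg et al.: for binary outcomes and mean forecasts,
and a consistent scoring function `ℓ` bounded in `[−1,1]`, the swap regret is bounded by
four times the unnormalized expected calibration error. -/
theorem stmt17 (ℓ : ℝ → ℝ → ℝ)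
    (hbound : ∀ a ∈ ({0, 1} : Set ℝ), ∀ c ∈ Set.Icc (0 : ℝ) 1,
      ℓ a c ∈ Set.Icc (-1 : ℝ) 1)
    (hcons : ∀ p ∈ Set.Icc (0 : ℝ) 1, ∀ c ∈ Set.Icc (0 : ℝ) 1,
      (1 - p) * ℓ 0 p + p * ℓ 1 p ≤ (1 - p) * ℓ 0 c + p * ℓ 1 c)
    {T : Type*} [Fintype T] [Nonempty T]
    (y : T → ℝ) (hy : ∀ t, y t = 0 ∨ y t = 1)
    (v : T → ℝ) (hv : ∀ t, v t ∈ Set.Icc (0 : ℝ) 1) :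
    (⨆ σ : {f : ℝ → ℝ // ∀ x ∈ Set.Icc (0 : ℝ) 1, f x ∈ Set.Icc (0 : ℝ) 1},
        ∑ t, (ℓ (y t) (v t) - ℓ (y t) (σ.1 (v t))))
      ≤ 4 * ∑ γ ∈ Finset.image v Finset.univ,
          |∑ t ∈ Finset.univ.filter (fun t => v t = γ), (y t - γ)| :=
  stmt17_general ℓ hbound hcons y hy v hv
end
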